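/- arXiv:1008.1608 — 7 statements merged into one kernel-verified Lean document; each statement's English description precedes it below -/
import Mathlib

section
/- Let k ≥ 2 and let 𝔖 be a k-uniform set system with m ≥ 3 blocks. Then 𝔖 admits a (k−1)-shift universal cycle if and only if 𝔖 has an alternating hamiltonian cycle. -/
/-- An alternating cycle through the set `B` of blocks: a cyclic ordering
`f : ZMod m → Finset ℕ` of all blocks of `B` (`m = B.card`) together with chosen
points `c i ∈ f i ∩ f (i+1)` such that `c i ≠ c (i+1)` for all `i`. -/
def IsAltCycleOn (B : Finset (Finset ℕ)) (m : ℕ)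
    (f : ZMod m → Finset ℕ) (c : ZMod m → ℕ) : Prop :=
  m = B.card ∧ (∀ i, f i ∈ B) ∧ (∀ b ∈ B, ∃ i, f i = b) ∧ Function.Injective f ∧
    (∀ i, c i ∈ f i ∧ c i ∈ f (i + 1)) ∧ ∀ i, c i ≠ c (i + 1)

/-- A set system (with block collection `A`) has an alternating hamiltonian cycle;
for a system with a single block the condition is taken to hold trivially. -/
def HasAltHamCycle (A : Finset (Finset ℕ)) : Prop :=
  A.card = 1 ∨ ∃ m f c, IsAltCycleOn A m f c

/-- The cycle is colorful: every point lying in the intersection of two distinct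
blocks occurs as one of the chosen points `c i`. -/
def ColorfulOn (A : Finset (Finset ℕ)) (m : ℕ) (c : ZMod m → ℕ) : Prop :=
  ∀ x : ℕ, (∃ B ∈ A, ∃ B' ∈ A, B ≠ B' ∧ x ∈ B ∧ x ∈ B') → ∃ i, c i = x

/-- A set system (with block collection `A`) is colorful alternating hamiltonian
(c.a.h.); for a system with a single block the condition is taken to hold trivially. -/
def HasCAHCycle (A : Finset (Finset ℕ)) : Prop :=
  A.card = 1 ∨ ∃ m f c, IsAltCycleOn A m f c ∧ ColorfulOn A m c
/-- A `(k−1)`-shift universal cycle for a `k`-uniform set system with point set `X`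
and block collection `A` (`m = A.card`): a sequence `u` of points of `X` of length
`m(k−1)` (indexed by `ZMod (m*(k-1))`) such that the `m` sets
`{u ((k−1)i+1), u ((k−1)i+2), …, u ((k−1)i+k)}`, for `i = 0, 1, …, m−1`, are exactly
the `m` blocks, each occurring exactly once. -/
def HasShiftUC (k : ℕ) (X : Finset ℕ) (A : Finset (Finset ℕ)) : Prop :=
  ∃ u : ZMod (A.card * (k - 1)) → ℕ, (∀ z, u z ∈ X) ∧
    let T : Fin A.card → Finset ℕ := fun i =>
      Finset.image
        (fun j : Fin k =>
          u (((k - 1) * (i : ℕ) + 1 + (j : ℕ) : ℕ) : ZMod (A.card * (k - 1))))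
        Finset.univ
    (∀ i, T i ∈ A) ∧ Function.Injective T ∧ ∀ B ∈ A, ∃ i, T i = B

/-!
Consecutive windows `{u ((k-1)i+1), …, u ((k-1)i+k)}` of a `(k-1)`-shift universal cycle share
exactly the position `(k-1)(i+1)+1`, so the points `c i = u ((k-1)(i+1)+1)` lie in the
intersections of consecutive blocks; `c (i-1)` and `c i` are the first and last entries of a
window of `k` distinct points, hence differ. Conversely, list each block `A i` as a path from
`c (i-1)` to `c i`; consecutive paths agree at their common endpoint, so splicing them with an
overlap of one gives a `(k-1)`-shift universal cycle.
-/

open Finset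

section Windows

variable {α : Type*} [DecidableEq α] {k m : ℕ}

def window (k m : ℕ) (u : ZMod (m * (k - 1)) → α) (i : ℕ) : Finset α :=
  univ.image fun j : Fin k => u (((k - 1) * i + 1 + (j : ℕ) : ℕ) : ZMod (m * (k - 1)))

lemma natCast_shift_congr {a b : ℕ} (h : (a : ZMod m) = b) (r : ℕ) :
    (((k - 1) * a + r : ℕ) : ZMod (m * (k - 1))) = ((k - 1) * b + r : ℕ) := by
  rw [ZMod.natCast_eq_natCast_iff] at h ⊢
  rw [mul_comm]
  exact (h.mul_left' _).add_right r

lemma window_congr (u : ZMod (m * (k - 1)) → α) {a b : ℕ} (h : (a : ZMod m) = b) :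
    window k m u a = window k m u b := by
  unfold window
  congr! 3 with j
  simp only [add_assoc, natCast_shift_congr h]

lemma first_mem_window (hk : 0 < k) (u : ZMod (m * (k - 1)) → α) (i : ℕ) :
    u ((k - 1) * i + 1 : ℕ) ∈ window k m u i :=
  mem_image.mpr ⟨⟨0, hk⟩, mem_univ _, rfl⟩

lemma next_first_mem_window (hk : 0 < k) (u : ZMod (m * (k - 1)) → α) (i : ℕ) :
    u ((k - 1) * (i + 1) + 1 : ℕ) ∈ window k m u i :=
  mem_image.mpr ⟨⟨k - 1, by omega⟩, mem_univ _, by congr 2; ring⟩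

lemma first_ne_next_first (hk : 2 ≤ k) (u : ZMod (m * (k - 1)) → α) {i : ℕ}
    (hcard : (window k m u i).card = k) :
    u ((k - 1) * i + 1 : ℕ) ≠ u ((k - 1) * (i + 1) + 1 : ℕ) := by
  intro h
  have hinj := card_image_iff.mp (hcard.trans (card_fin k).symm)
  have : (⟨0, by omega⟩ : Fin k) = ⟨k - 1, by omega⟩ :=
    hinj (mem_univ _) (mem_univ _) (h.trans (by congr 2; ring))
  simp only [Fin.mk.injEq] at this
  omega

end Windows

lemma hasShiftUC_iff {k : ℕ} {X : Finset ℕ} {A : Finset (Finset ℕ)} :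
    HasShiftUC k X A ↔ ∃ u : ZMod (A.card * (k - 1)) → ℕ, (∀ z, u z ∈ X) ∧
      (∀ i : Fin A.card, window k A.card u i ∈ A) ∧
      Function.Injective (fun i : Fin A.card => window k A.card u i) ∧
      ∀ B ∈ A, ∃ i : Fin A.card, window k A.card u i = B :=
  Iff.rfl

lemma exists_enum_from_to {α : Type*} [DecidableEq α] {k : ℕ} {s : Finset α} {a b : α}
    (ha : a ∈ s) (hb : b ∈ s) (hab : a ≠ b) (hs : s.card = k) :
    ∃ e : ℕ → α, (∀ j, e j ∈ s) ∧ e 0 = a ∧ e (k - 1) = b ∧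
      univ.image (fun j : Fin k => e j) = s := by
  subst hs
  set L := ((s.erase a).erase b).toList
  have hL : L.length + 2 = s.card := by
    rw [length_toList, card_erase_of_mem (mem_erase.mpr ⟨hab.symm, hb⟩),
      card_erase_of_mem ha]
    have : 2 ≤ s.card := by
      simpa [card_pair hab] using card_le_card (insert_subset ha (singleton_subset_iff.mpr hb))
    omega
  have hmem : ∀ x, x ∈ a :: L ++ [b] ↔ x ∈ s := by
    intro x
    simp only [L, List.mem_append, List.mem_cons, mem_toList, mem_erase,
      List.not_mem_nil, or_false]
    constructor
    · rintro ((rfl | ⟨-, -, hx⟩) | rfl) <;> assumption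
    · tauto
  have he : ∀ j, (a :: L ++ [b]).getD j a ∈ s := by
    intro j
    by_cases hj : j < (a :: L ++ [b]).length
    · rw [List.getD_eq_getElem _ _ hj]
      exact (hmem _).mp (List.getElem_mem hj)
    · rwa [List.getD_eq_default _ _ (not_lt.mp hj)]
  refine ⟨fun j => (a :: L ++ [b]).getD j a, he, rfl, ?_, ?_⟩
  · show (a :: L ++ [b]).getD (s.card - 1) a = b
    rw [List.getD_append_right _ _ _ _ (by simp only [List.length_cons]; omega),
      List.length_cons, show s.card - 1 - (L.length + 1) = 0 by omega]
    rfl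
  · ext x
    simp only [mem_image, mem_univ, true_and]
    refine ⟨fun ⟨j, hj⟩ => hj ▸ he j, fun hx => ?_⟩
    obtain ⟨t, ht, rfl⟩ := List.mem_iff_getElem.mp ((hmem x).mpr hx)
    have htk : t < s.card := by
      simp only [List.length_append, List.length_cons, List.length_nil] at ht
      omega
    exact ⟨⟨t, htk⟩, List.getD_eq_getElem _ _ ht⟩

section Splice

variable {α : Type*} {k m : ℕ}

/-- Concatenates the paths `e i 0, …, e i (k-2)` around a cycle so that `e i j` sits at
position `(k-1)i+1+j`. -/
def splice (k m : ℕ) (e : ZMod m → ℕ → α) (z : ZMod (m * (k - 1))) : α :=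
  e ((z - 1).val / (k - 1) : ℕ) ((z - 1).val % (k - 1))

lemma splice_natCast (hk : 2 ≤ k) {e : ZMod m → ℕ → α} (he : ∀ i, e i (k - 1) = e (i + 1) 0)
    (i j : ℕ) (hj : j < k) : splice k m e ((k - 1) * i + 1 + j : ℕ) = e i j := by
  have hk1 : 0 < k - 1 := by omega
  have hpos : (((k - 1) * i + 1 + j : ℕ) : ZMod (m * (k - 1))) - 1 = ((k - 1) * i + j : ℕ) := by
    push_cast
    ring
  rw [splice, hpos, ZMod.val_natCast, mul_comm m, Nat.mod_mul_right_div_self,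
    Nat.mod_mul_right_mod, ZMod.natCast_mod]
  obtain hj' | rfl : j < k - 1 ∨ j = k - 1 := by omega
  · rw [Nat.mul_add_div hk1, Nat.div_eq_of_lt hj', Nat.mul_add_mod, Nat.mod_eq_of_lt hj',
      add_zero]
  · rw [← mul_add_one, Nat.mul_div_cancel_left _ hk1, Nat.mul_mod_right, he]
    push_cast
    rfl

lemma window_splice [DecidableEq α] (hk : 2 ≤ k) {e : ZMod m → ℕ → α}
    (he : ∀ i, e i (k - 1) = e (i + 1) 0) (i : ℕ) :
    window k m (splice k m e) i = univ.image fun j : Fin k => e i j := by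
  unfold window
  congr! 2 with j
  exact splice_natCast hk he i j j.isLt

end Splice

lemma isAltCycleOn_windows {k : ℕ} {A : Finset (Finset ℕ)} (hk : 2 ≤ k) (hA : A.card ≠ 0)
    (huniform : ∀ B ∈ A, B.card = k) {u : ZMod (A.card * (k - 1)) → ℕ}
    (hmem : ∀ i : Fin A.card, window k A.card u i ∈ A)
    (hinj : Function.Injective fun i : Fin A.card => window k A.card u i)
    (hsurj : ∀ B ∈ A, ∃ i : Fin A.card, window k A.card u i = B) :
    IsAltCycleOn A A.card (fun i => window k A.card u i.val)
      (fun i => u ((k - 1) * (i.val + 1) + 1 : ℕ)) := by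
  have : NeZero A.card := ⟨hA⟩
  have hsucc (i : ZMod A.card) : ((i + 1).val : ZMod A.card) = (i.val + 1 : ℕ) := by simp
  have hwindow_succ (i : ZMod A.card) :
      window k A.card u (i + 1).val = window k A.card u (i.val + 1) :=
    window_congr u (hsucc i)
  refine ⟨rfl, fun i => hmem ⟨i.val, i.val_lt⟩, fun B hB => ?_, fun a b hab => ?_,
    fun i => ⟨next_first_mem_window (by omega) u _, ?_⟩, fun i => ?_⟩
  · obtain ⟨j, rfl⟩ := hsurj B hB
    exact ⟨j.val, by simp only [ZMod.val_natCast_of_lt j.isLt]⟩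
  · exact ZMod.val_injective _ (Fin.mk.inj_iff.mp (@hinj ⟨a.val, a.val_lt⟩ ⟨b.val, b.val_lt⟩ hab))
  · show _ ∈ window k A.card u (i + 1).val
    exact hwindow_succ i ▸ first_mem_window (by omega) u _
  · have hcard : (window k A.card u (i.val + 1)).card = k :=
      hwindow_succ i ▸ huniform _ (hmem ⟨(i + 1).val, (i + 1).val_lt⟩)
    show u _ ≠ u _
    rw [natCast_shift_congr (show (((i + 1).val + 1 : ℕ) : ZMod A.card) = (i.val + 1 + 1 : ℕ) by
      push_cast [hsucc]; rfl)]
    exact first_ne_next_first hk u hcard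

lemma hasShiftUC_of_isAltCycleOn {k m : ℕ} {X : Finset ℕ} {A : Finset (Finset ℕ)}
    {f : ZMod m → Finset ℕ} {c : ZMod m → ℕ} (hk : 2 ≤ k)
    (huniform : ∀ B ∈ A, B ⊆ X ∧ B.card = k) (h : IsAltCycleOn A m f c) :
    HasShiftUC k X A := by
  obtain ⟨rfl, hfA, hsurj, hinj, hc, hne⟩ := h
  have : NeZero A.card := ⟨card_ne_zero_of_mem (hfA 0)⟩
  have hpath (i : ZMod A.card) : ∃ e : ℕ → ℕ, (∀ j, e j ∈ f i) ∧ e 0 = c (i - 1) ∧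
      e (k - 1) = c i ∧ univ.image (fun j : Fin k => e j) = f i :=
    exists_enum_from_to (by simpa using (hc (i - 1)).2) (hc i).1 (by simpa using hne (i - 1))
      (huniform _ (hfA i)).2
  choose e he_mem he_first he_last he_image using hpath
  have hglue (i : ZMod A.card) : e i (k - 1) = e (i + 1) 0 := by
    rw [he_last, he_first, add_sub_cancel_right]
  have hwindow (j : ℕ) : window k A.card (splice k A.card e) j = f j :=
    (window_splice hk hglue j).trans (he_image _)
  refine hasShiftUC_iff.mpr ⟨splice k A.card e, fun z => (huniform _ (hfA _)).1 (he_mem _ _),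
    fun j => hwindow j ▸ hfA _, fun a b hab => ?_, fun B hB => ?_⟩
  · have := congrArg ZMod.val (hinj ((hwindow a).symm.trans (hab.trans (hwindow b))))
    rwa [ZMod.val_natCast_of_lt a.isLt, ZMod.val_natCast_of_lt b.isLt, ← Fin.ext_iff] at this
  · obtain ⟨i, rfl⟩ := hsurj B hB
    exact ⟨⟨i.val, i.val_lt⟩, (hwindow _).trans (congrArg f (ZMod.natCast_zmod_val i))⟩

/-- For `k ≥ 2`, a `k`-uniform set system with `m ≥ 3` blocks admits a `(k−1)`-shift
universal cycle if and only if it has an alternating hamiltonian cycle. -/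
theorem shiftUC_iff_altHamCycle (k : ℕ) (hk : 2 ≤ k)
    (X : Finset ℕ) (A : Finset (Finset ℕ))
    (huniform : ∀ B ∈ A, B ⊆ X ∧ B.card = k) (hm : 3 ≤ A.card) :
    HasShiftUC k X A ↔ HasAltHamCycle A := by
  constructor
  · rintro ⟨u, -, hmem, hinj, hsurj⟩
    exact Or.inr ⟨_, _, _, isAltCycleOn_windows hk (by omega) (fun B hB => (huniform B hB).2)
      hmem hinj hsurj⟩
  · rintro (hone | ⟨m, f, c, h⟩)
    · omega
    · exact hasShiftUC_of_isAltCycleOn hk huniform h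
end

section
/- Let 𝔖 be a set system and let C_1 and C_2 be two alternating cycles in 𝔖 through disjoint sets of blocks ℬ_1 and ℬ_2, of lengths m_1 and m_2 respectively (m_1, m_2 ≥ 3). If some chosen point (edge color) of C_1 equals some chosen point (edge color) of C_2, then 𝔖 has an alternating cycle of length m_1 + m_2 through the set of blocks ℬ_1 ∪ ℬ_2. -/

private lemma rotate_altCycle' {B : Finset (Finset ℕ)} {m : ℕ} {f : ZMod m → Finset ℕ}
    {c : ZMod m → ℕ} (h : IsAltCycleOn B m f c) (s : ZMod m) :
    IsAltCycleOn B m (fun k => f (k + s)) (fun k => c (k + s)) := by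
  obtain ⟨h1, h2, h3, h4, h5, h6⟩ := h
  refine ⟨h1, fun i => h2 _, fun b hb => ?_, fun a b hab => ?_, fun i => ?_, fun i => ?_⟩
  · obtain ⟨i, hi⟩ := h3 b hb
    exact ⟨i - s, by simpa using hi⟩
  · have := h4 hab
    simpa using this
  · exact ⟨(h5 (i + s)).1, by simpa [add_right_comm] using (h5 (i + s)).2⟩
  · simpa [add_right_comm] using h6 (i + s)

private lemma merge_aux (B₁ B₂ : Finset (Finset ℕ)) (hdisj : Disjoint B₁ B₂)
    (m₁ m₂ : ℕ) (hm₁ : 3 ≤ m₁) (hm₂ : 3 ≤ m₂)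
    (f₁ : ZMod m₁ → Finset ℕ) (c₁ : ZMod m₁ → ℕ)
    (f₂ : ZMod m₂ → Finset ℕ) (c₂ : ZMod m₂ → ℕ)
    (h₁ : IsAltCycleOn B₁ m₁ f₁ c₁) (h₂ : IsAltCycleOn B₂ m₂ f₂ c₂)
    (hshare : c₁ 0 = c₂ 0) :
    ∃ (f : ZMod (m₁ + m₂) → Finset ℕ) (c : ZMod (m₁ + m₂) → ℕ),
      IsAltCycleOn (B₁ ∪ B₂) (m₁ + m₂) f c := by
  haveI : NeZero m₁ := ⟨by omega⟩
  haveI : NeZero m₂ := ⟨by omega⟩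
  haveI : NeZero (m₁ + m₂) := ⟨by omega⟩
  obtain ⟨e1, e2, e3, e4, e5, e6⟩ := h₁
  obtain ⟨g1, g2, g3, g4, g5, g6⟩ := h₂
  set n := m₁ + m₂ with hn
  -- wrap lemmas
  have w₁ : ((m₁ - 1 : ℕ) : ZMod m₁) + 1 = 0 := by
    have : ((m₁ - 1 : ℕ) : ZMod m₁) + 1 = ((m₁ - 1 + 1 : ℕ) : ZMod m₁) := by push_cast; ring
    rw [this, Nat.sub_add_cancel (by omega), ZMod.natCast_self]
  have w₂ : ((m₂ - 1 : ℕ) : ZMod m₂) + 1 = 0 := by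
    have : ((m₂ - 1 : ℕ) : ZMod m₂) + 1 = ((m₂ - 1 + 1 : ℕ) : ZMod m₂) := by push_cast; ring
    rw [this, Nat.sub_add_cancel (by omega), ZMod.natCast_self]
  have hval : ∀ k : ZMod n, k.val < n := fun k => ZMod.val_lt k
  have hsucc : ∀ k : ZMod n, (k + 1).val = (k.val + 1) % n := by
    intro k
    conv_lhs => rw [show k + 1 = ((k.val + 1 : ℕ) : ZMod n) by push_cast [ZMod.natCast_val, ZMod.cast_id]; ring]
    rw [ZMod.val_natCast]
  refine ⟨fun k => if k.val < m₁ then f₁ ((k.val : ZMod m₁) + 1) else f₂ (((k.val - m₁ : ℕ) : ZMod m₂) + 1),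
    fun k => if k.val < m₁ then c₁ ((k.val : ZMod m₁) + 1) else c₂ (((k.val - m₁ : ℕ) : ZMod m₂) + 1),
    ?_, ?_, ?_, ?_, ?_, ?_⟩
  · rw [Finset.card_union_of_disjoint hdisj, ← e1, ← g1]
  · intro k
    by_cases h : k.val < m₁ <;> simp only [h, if_pos, if_neg, if_true, if_false]
    · exact Finset.mem_union_left _ (e2 _)
    · exact Finset.mem_union_right _ (g2 _)
  · intro b hb
    rcases Finset.mem_union.mp hb with hb | hb
    · obtain ⟨i, hi⟩ := e3 b hb
      refine ⟨(((i - 1).val : ℕ) : ZMod n), ?_⟩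
      have hvlt : (i - 1).val < m₁ := ZMod.val_lt _
      have hv : ((((i - 1).val : ℕ) : ZMod n)).val = (i - 1).val := ZMod.val_cast_of_lt (by omega)
      simp only [hv]
      rw [if_pos hvlt]
      rw [show (((i - 1).val : ℕ) : ZMod m₁) = i - 1 by simp [ZMod.natCast_val, ZMod.cast_id]]
      simpa using hi
    · obtain ⟨i, hi⟩ := g3 b hb
      refine ⟨((m₁ + (i - 1).val : ℕ) : ZMod n), ?_⟩
      have hvlt : (i - 1).val < m₂ := ZMod.val_lt _
      have hv : (((m₁ + (i - 1).val : ℕ) : ZMod n)).val = m₁ + (i - 1).val :=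
        ZMod.val_cast_of_lt (by omega)
      simp only [hv]
      rw [if_neg (by omega)]
      rw [show (m₁ + (i - 1).val - m₁ : ℕ) = (i - 1).val by omega]
      rw [show (((i - 1).val : ℕ) : ZMod m₂) = i - 1 by simp [ZMod.natCast_val, ZMod.cast_id]]
      simpa using hi
  · intro a b hab
    by_cases ha : a.val < m₁ <;> by_cases hb : b.val < m₁ <;>
      simp only [ha, hb, if_pos, if_neg, if_true, if_false] at hab
    · have := e4 hab
      have h5 : (a.val : ZMod m₁) = (b.val : ZMod m₁) := by
        have := congrArg (· - (1 : ZMod m₁)) this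
        simpa using this
      have : a.val = b.val := by
        have := congrArg ZMod.val h5
        rwa [ZMod.val_cast_of_lt ha, ZMod.val_cast_of_lt hb] at this
      exact ZMod.val_injective _ this
    · exact absurd hab.symm (by
        intro hcon
        exact (Finset.disjoint_left.mp hdisj (e2 _)) (hcon ▸ g2 _))
    · exact absurd hab (by
        intro hcon
        exact (Finset.disjoint_left.mp hdisj (e2 _)) (hcon ▸ g2 _))
    · have := g4 hab
      have h5 : ((a.val - m₁ : ℕ) : ZMod m₂) = ((b.val - m₁ : ℕ) : ZMod m₂) := by
        have := congrArg (· - (1 : ZMod m₂)) this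
        simpa using this
      have hva : a.val - m₁ < m₂ := by have := hval a; omega
      have hvb : b.val - m₁ < m₂ := by have := hval b; omega
      have : a.val = b.val := by
        have := congrArg ZMod.val h5
        rw [ZMod.val_cast_of_lt hva, ZMod.val_cast_of_lt hvb] at this
        omega
      exact ZMod.val_injective _ this
  · intro k
    dsimp only
    have hk := hval k
    have hk1 := hsucc k
    rcases (by omega : k.val + 1 < m₁ ∨ k.val + 1 = m₁ ∨ (m₁ ≤ k.val ∧ k.val + 1 < n) ∨ k.val + 1 = n) with h | h | ⟨h, h'⟩ | h
    · -- inside first cycle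
      have hk1' : (k + 1).val = k.val + 1 := by rw [hk1, Nat.mod_eq_of_lt (by omega)]
      rw [if_pos (by omega), if_pos (by omega), hk1', if_pos h]
      push_cast
      exact ⟨(e5 _).1, by rw [show ((k.val : ZMod m₁) + 1 + 1) = ((k.val : ZMod m₁) + 1) + 1 by ring]; exact (e5 _).2⟩
    · -- splice point A₀ → B₁
      have hk1' : (k + 1).val = m₁ := by rw [hk1, Nat.mod_eq_of_lt (by omega)]; omega
      rw [if_pos (by omega), if_pos (by omega), hk1', if_neg (by omega)]
      rw [show (k.val : ℕ) = m₁ - 1 by omega, w₁, show (m₁ - m₁ : ℕ) = 0 by omega]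
      refine ⟨(e5 0).1, ?_⟩
      rw [hshare]
      simpa using (g5 0).2
    · -- inside second cycle
      have hk1' : (k + 1).val = k.val + 1 := by rw [hk1, Nat.mod_eq_of_lt (by omega)]
      rw [if_neg (by omega), if_neg (by omega), hk1', if_neg (by omega)]
      rw [show (k.val + 1 - m₁ : ℕ) = (k.val - m₁) + 1 by omega]
      push_cast
      exact ⟨(g5 _).1, by rw [show (((k.val - m₁ : ℕ) : ZMod m₂) + 1 + 1) = (((k.val - m₁ : ℕ) : ZMod m₂) + 1) + 1 by ring]; exact (g5 _).2⟩
    · -- splice point B₀ → A₁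
      have hk1' : (k + 1).val = 0 := by rw [hk1, h, Nat.mod_self]
      rw [if_neg (by omega), if_neg (by omega), hk1', if_pos (by omega)]
      rw [show (k.val - m₁ : ℕ) = m₂ - 1 by omega, w₂]
      refine ⟨(g5 0).1, ?_⟩
      rw [← hshare]
      simpa using (e5 0).2
  · intro k
    dsimp only
    have hk := hval k
    have hk1 := hsucc k
    rcases (by omega : k.val + 1 < m₁ ∨ k.val + 1 = m₁ ∨ (m₁ ≤ k.val ∧ k.val + 1 < n) ∨ k.val + 1 = n) with h | h | ⟨h, h'⟩ | h
    · have hk1' : (k + 1).val = k.val + 1 := by rw [hk1, Nat.mod_eq_of_lt (by omega)]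
      rw [if_pos (by omega), hk1', if_pos h]
      push_cast
      exact fun hcon => e6 _ (by rw [show ((k.val : ZMod m₁) + 1 + 1) = ((k.val : ZMod m₁) + 1) + 1 by ring] at hcon; exact hcon)
    · have hk1' : (k + 1).val = m₁ := by rw [hk1, Nat.mod_eq_of_lt (by omega)]; omega
      rw [if_pos (by omega), hk1', if_neg (by omega)]
      rw [show (k.val : ℕ) = m₁ - 1 by omega, w₁, hshare,
        show (m₁ - m₁ : ℕ) = 0 by omega]
      push_cast
      simpa using g6 0
    · have hk1' : (k + 1).val = k.val + 1 := by rw [hk1, Nat.mod_eq_of_lt (by omega)]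
      rw [if_neg (by omega), hk1', if_neg (by omega)]
      rw [show (k.val + 1 - m₁ : ℕ) = (k.val - m₁) + 1 by omega]
      push_cast
      exact fun hcon => g6 _ (by rw [show (((k.val - m₁ : ℕ) : ZMod m₂) + 1 + 1) = (((k.val - m₁ : ℕ) : ZMod m₂) + 1) + 1 by ring] at hcon; exact hcon)
    · have hk1' : (k + 1).val = 0 := by rw [hk1, h, Nat.mod_self]
      rw [if_neg (by omega), hk1', if_pos (by omega)]
      rw [show (k.val - m₁ : ℕ) = m₂ - 1 by omega, w₂, ← hshare]
      push_cast
      simpa using e6 0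

/-- If two alternating cycles, through disjoint sets of blocks `B₁` and `B₂` of a set
system, of lengths `m₁, m₂ ≥ 3`, share a chosen point (edge color), then the set
system has an alternating cycle of length `m₁ + m₂` through `B₁ ∪ B₂`. -/
theorem altCycle_union_of_shared_color
    (X : Finset ℕ) (A B₁ B₂ : Finset (Finset ℕ))
    (hA : ∀ B ∈ A, B ⊆ X) (hB₁ : B₁ ⊆ A) (hB₂ : B₂ ⊆ A) (hdisj : Disjoint B₁ B₂)
    (m₁ m₂ : ℕ) (hm₁ : 3 ≤ m₁) (hm₂ : 3 ≤ m₂)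
    (f₁ : ZMod m₁ → Finset ℕ) (c₁ : ZMod m₁ → ℕ)
    (f₂ : ZMod m₂ → Finset ℕ) (c₂ : ZMod m₂ → ℕ)
    (h₁ : IsAltCycleOn B₁ m₁ f₁ c₁) (h₂ : IsAltCycleOn B₂ m₂ f₂ c₂)
    (hshare : ∃ i j, c₁ i = c₂ j) :
    ∃ (f : ZMod (m₁ + m₂) → Finset ℕ) (c : ZMod (m₁ + m₂) → ℕ),
      IsAltCycleOn (B₁ ∪ B₂) (m₁ + m₂) f c := by
  obtain ⟨i₀, j₀, hij⟩ := hshare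
  have h₁' := rotate_altCycle' h₁ i₀
  have h₂' := rotate_altCycle' h₂ j₀
  exact merge_aux B₁ B₂ hdisj m₁ m₂ hm₁ hm₂ _ _ _ _ h₁' h₂' (by simpa using hij)
end

section
/- (Filling in Groups) If there exists a c.a.h. {3}-GDD of type [g_1, g_2, …, g_t], and for each i ∈ {1,…,t} there exists a c.a.h. (g_i,3,2)-covering, then there exists a c.a.h. (g_1 + g_2 + ⋯ + g_t, 3, 2)-covering. -/
/-- An `(n,3,2)`-covering: a 3-uniform set system of order `n` in which every
2-subset of the point set is contained in at least one block. -/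
def IsCovering (n : ℕ) (X : Finset ℕ) (A : Finset (Finset ℕ)) : Prop :=
  X.card = n ∧ (∀ B ∈ A, B ⊆ X ∧ B.card = 3) ∧
    ∀ x ∈ X, ∀ y ∈ X, x ≠ y → ∃ B ∈ A, x ∈ B ∧ y ∈ B

/-- The covering number `C(n,3,2)`: the minimum number of blocks in an
`(n,3,2)`-covering. -/
noncomputable def coveringNumber (n : ℕ) : ℕ :=
  sInf {m | ∃ X A, IsCovering n X A ∧ A.card = m}
/-- A group divisible design `(X, G, A)`: `G` is a partition of `X` into nonempty
groups, every 2-subset of `X` not contained in a group lies in exactly one block,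
and every block meets every group in at most one point. -/
def IsGDD (X : Finset ℕ) (G : Finset (Finset ℕ)) (A : Finset (Finset ℕ)) : Prop :=
  (∀ g ∈ G, g ⊆ X ∧ g.Nonempty) ∧
  (∀ x ∈ X, ∃! g, g ∈ G ∧ x ∈ g) ∧
  (∀ B ∈ A, B ⊆ X) ∧
  (∀ x ∈ X, ∀ y ∈ X, x ≠ y → (∀ g ∈ G, ¬ (x ∈ g ∧ y ∈ g)) →
    ∃! B, B ∈ A ∧ x ∈ B ∧ y ∈ B) ∧
  ∀ B ∈ A, ∀ g ∈ G, (B ∩ g).card ≤ 1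

/-- The type of a GDD: the multiset of its group sizes. -/
def GDDType (G : Finset (Finset ℕ)) : Multiset ℕ := G.val.map Finset.card

/-- A `{3}`-GDD: a GDD all of whose blocks have size 3. -/
def IsThreeGDD (X : Finset ℕ) (G A : Finset (Finset ℕ)) : Prop :=
  IsGDD X G A ∧ ∀ B ∈ A, B.card = 3

/-- Existence of a c.a.h. `{3}`-GDD of type `T`. -/
def CAHThreeGDD (T : Multiset ℕ) : Prop :=
  ∃ X G A, IsThreeGDD X G A ∧ GDDType G = T ∧ HasCAHCycle A

/-- Strengthened property used for the induction: an `(n,3,2)`-covering with an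
alternating hamiltonian cycle in which *every* point occurs as a chosen color. -/
def StrongP (n : ℕ) : Prop :=
  ∃ (X : Finset ℕ) (A : Finset (Finset ℕ)) (m : ℕ)
    (f : ZMod m → Finset ℕ) (c : ZMod m → ℕ),
    IsCovering n X A ∧ IsAltCycleOn A m f c ∧ ∀ x ∈ X, ∃ i, c i = x

def bl9 : List (Finset ℕ) :=
  [{0,1,2}, {2,3,7}, {0,3,6}, {2,4,6}, {2,5,8}, {1,5,6},
   {6,7,8}, {0,5,7}, {0,4,8}, {1,3,8}, {3,4,5}, {1,4,7}]

def cl9 : List ℕ := [2,3,6,2,5,6,7,0,8,3,4,1]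

lemma strong_base : StrongP 9 := by
  refine ⟨{0,1,2,3,4,5,6,7,8}, bl9.toFinset, 12,
    fun i => bl9.getD i.val ∅, fun i => cl9.getD i.val 0, ⟨?_, ?_, ?_⟩,
    ⟨?_, ?_, ?_, ?_, ?_, ?_⟩, ?_⟩
  · decide
  · decide
  · decide
  · decide
  · decide
  · decide
  · have h : ∀ i j : ZMod 12, bl9.getD i.val ∅ = bl9.getD j.val ∅ → i = j := by decide
    exact fun i j => h i j
  · decide
  · decide
  · decide

lemma strong_step (n : ℕ) (hn : 9 ≤ n) (h : StrongP n) : StrongP (n + 1) := by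
  obtain ⟨X, A, m, f, c, ⟨hXcard, hblocks, hcover⟩, ⟨hmA, hmem, hsurj, hinj, hcc, hne⟩, hall⟩ := h
  -- m ≥ 2
  have hm2 : 2 ≤ m := by
    by_contra hlt
    push_neg at hlt
    interval_cases m
    · have hA : A = ∅ := Finset.card_eq_zero.mp hmA.symm
      exact absurd (hmem 0) (by simp [hA])
    · exact hne 0 (congrArg c (by decide))
  haveI : NeZero m := ⟨by omega⟩
  have hfX : ∀ i, f i ⊆ X := fun i => (hblocks _ (hmem i)).1
  set w : ℕ := c ((m - 1 : ℕ) : ZMod m) with hw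
  have hwX : w ∈ X := hfX _ (hcc _).1
  set v : ℕ := X.sup id + 1 with hv
  have hvX : v ∉ X := by
    intro hmem'
    have := Finset.le_sup (f := id) hmem'
    simp only [id] at this
    omega
  have hvw : v ≠ w := fun h => hvX (h ▸ hwX)
  set l : List ℕ := w :: (X.erase w).toList with hl
  have hlen : l.length = n := by
    simp only [hl, List.length_cons, Finset.length_toList,
      Finset.card_erase_of_mem hwX, hXcard]
    omega
  have hlnodup : l.Nodup := by
    refine List.nodup_cons.mpr ⟨?_, Finset.nodup_toList _⟩
    simp [Finset.mem_toList]
  have hlmem : ∀ x, x ∈ l ↔ x ∈ X := by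
    intro x
    simp only [hl, List.mem_cons, Finset.mem_toList, Finset.mem_erase]
    constructor
    · rintro (rfl | ⟨-, hx⟩)
      · exact hwX
      · exact hx
    · intro hx
      by_cases hxw : x = w
      · exact Or.inl hxw
      · exact Or.inr ⟨hxw, hx⟩
  have hn0 : 0 < n := by omega
  set xf : ℕ → ℕ := fun k => l.getD (k % n) 0 with hxf
  have hxfget : ∀ k, xf k = l[k % n]'(by rw [hlen]; exact Nat.mod_lt _ hn0) := by
    intro k
    exact List.getD_eq_getElem l 0 _
  have hxfmem : ∀ k, xf k ∈ X := by
    intro k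
    rw [← hlmem, hxfget]
    exact List.getElem_mem _
  have hxfv : ∀ k, xf k ≠ v := fun k he => hvX (he ▸ hxfmem k)
  have hxf_eq : ∀ a b, xf a = xf b → a % n = b % n := by
    intro a b hab
    rw [hxfget, hxfget] at hab
    exact (List.Nodup.getElem_inj_iff hlnodup).mp hab
  have hxf_lt_inj : ∀ a b, a < n → b < n → xf a = xf b → a = b := by
    intro a b ha hb hab
    have := hxf_eq a b hab
    rwa [Nat.mod_eq_of_lt ha, Nat.mod_eq_of_lt hb] at this
  have hxf0 : xf 0 = w := by
    rw [hxfget]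
    simp [hl]
  have hxfn : xf n = w := by
    rw [hxfget]
    simp [hl, Nat.mod_self]
  have hmod_succ : ∀ a, a < n → (a + 1) % n = if a + 1 = n then 0 else a + 1 := by
    intro a ha
    split
    · simp [*]
    · exact Nat.mod_eq_of_lt (by omega)
  have hxf_ne_succ : ∀ k, xf k ≠ xf (k + 1) := by
    intro k he
    have h1 := hxf_eq _ _ he
    have h2 : (k % n + 1) % n = (k + 1) % n := Nat.mod_add_mod k n 1
    have hr : k % n < n := Nat.mod_lt _ hn0
    rw [← h2, hmod_succ _ hr] at h1
    split at h1 <;> omega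
  set D : ℕ → Finset ℕ := fun k => {v, xf k, xf (k + 1)} with hD
  have hDmemv : ∀ k, v ∈ D k := by intro k; simp [hD]
  have hDsub : ∀ k, D k ⊆ insert v X := by
    intro k y hy
    simp only [hD, Finset.mem_insert, Finset.mem_singleton] at hy
    rcases hy with rfl | rfl | rfl
    · exact Finset.mem_insert_self _ _
    · exact Finset.mem_insert_of_mem (hxfmem _)
    · exact Finset.mem_insert_of_mem (hxfmem _)
  have hDcard : ∀ k, (D k).card = 3 := by
    intro k
    simp only [hD]
    rw [Finset.card_insert_of_notMem, Finset.card_insert_of_notMem, Finset.card_singleton]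
    · simp [hxf_ne_succ k]
    · simp only [Finset.mem_insert, Finset.mem_singleton]
      push_neg
      exact ⟨fun h => (hxfv k) h.symm, fun h => (hxfv (k+1)) h.symm⟩
  have hDnotA : ∀ k, D k ∉ A := fun k hk => hvX ((hblocks _ hk).1 (hDmemv k))
  have hDinj : ∀ k k', k < n → k' < n → D k = D k' → k = k' := by
    intro k k' hk hk' hDe
    have h1 : xf k ∈ D k' := by rw [← hDe]; simp [hD]
    have h2 : xf (k + 1) ∈ D k' := by rw [← hDe]; simp [hD]
    simp only [hD, Finset.mem_insert, Finset.mem_singleton] at h1 h2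
    rcases h1 with h1 | h1 | h1
    · exact absurd h1 (hxfv k)
    · exact hxf_lt_inj k k' hk hk' h1
    · rcases h2 with h2 | h2 | h2
      · exact absurd h2 (hxfv (k + 1))
      · have mk : k = (k' + 1) % n := by
          have := hxf_eq _ _ h1
          rwa [Nat.mod_eq_of_lt hk] at this
        have mk' : (k + 1) % n = k' := by
          have := hxf_eq _ _ h2
          rwa [Nat.mod_eq_of_lt hk'] at this
        rw [hmod_succ k' hk'] at mk
        rw [hmod_succ k hk] at mk'
        split_ifs at mk mk' <;> omega
      · exact absurd (h1.trans h2.symm) (hxf_ne_succ k)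
  set A' : Finset (Finset ℕ) := A ∪ (Finset.range n).image D with hA'
  have hdisj : Disjoint A ((Finset.range n).image D) := by
    rw [Finset.disjoint_right]
    intro B hB
    simp only [Finset.mem_image, Finset.mem_range] at hB
    obtain ⟨k, -, rfl⟩ := hB
    exact hDnotA k
  have hA'card : A'.card = m + n := by
    rw [hA', Finset.card_union_of_disjoint hdisj, ← hmA,
      Finset.card_image_of_injOn, Finset.card_range]
    intro a ha b hb hab
    exact hDinj a b (Finset.mem_range.mp ha) (Finset.mem_range.mp hb) hab
  set M : ℕ := m + n with hM
  haveI : NeZero M := ⟨by omega⟩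
  have hMval : ∀ i : ZMod M, i.val < M := fun i => ZMod.val_lt i
  set f' : ZMod M → Finset ℕ :=
    fun i => if i.val < m then f ((i.val : ℕ) : ZMod m) else D (i.val - m) with hf'
  set e : ℕ → ℕ := fun s => if s % 2 = 0 then v else xf (s + 1) with he
  set c' : ZMod M → ℕ := fun i =>
    if i.val < m - 1 then c ((i.val : ℕ) : ZMod m)
    else if i.val = m - 1 then w
    else if i.val < M - 1 then e (i.val - m)
    else w with hc'
  have hsucc : ∀ i : ZMod M, (i + 1).val = if i.val + 1 < M then i.val + 1 else 0 := by
    intro i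
    rw [ZMod.val_add, ZMod.val_one_eq_one_mod, Nat.mod_eq_of_lt (show 1 < M by omega)]
    by_cases h : i.val + 1 < M
    · rw [if_pos h, Nat.mod_eq_of_lt h]
    · rw [if_neg h]
      have hh : i.val + 1 = M := by have := hMval i; omega
      rw [hh, Nat.mod_self]
  have hcast_succ : ∀ a : ℕ, ((a + 1 : ℕ) : ZMod m) = ((a : ℕ) : ZMod m) + 1 := by
    intro a; push_cast; ring
  have hm10 : ((m - 1 : ℕ) : ZMod m) + 1 = 0 := by
    rw [← hcast_succ, show m - 1 + 1 = m by omega, ZMod.natCast_self]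
  have hwD0 : w ∈ D 0 := by simp [hD, hxf0]
  have hwDn : w ∈ D (n - 1) := by
    have hh : n - 1 + 1 = n := by omega
    simp [hD, hh, hxfn]
  have hwf0 : w ∈ f 0 := by
    have := (hcc ((m - 1 : ℕ) : ZMod m)).2
    rwa [hm10] at this
  -- membership of f'
  have hf'mem : ∀ i, f' i ∈ A' := by
    intro i
    simp only [hf']
    split_ifs with hi
    · exact Finset.mem_union_left _ (hmem _)
    · refine Finset.mem_union_right _ (Finset.mem_image.mpr
        ⟨i.val - m, Finset.mem_range.mpr ?_, rfl⟩)
      have := hMval i; omega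
  have hf'surj : ∀ b ∈ A', ∃ i, f' i = b := by
    intro b hb
    rcases Finset.mem_union.mp hb with hbA | hbD
    · obtain ⟨i0, rfl⟩ := hsurj b hbA
      refine ⟨((i0.val : ℕ) : ZMod M), ?_⟩
      have h1 : ((i0.val : ℕ) : ZMod M).val = i0.val :=
        ZMod.val_cast_of_lt (by have := ZMod.val_lt i0; omega)
      simp only [hf', h1]
      rw [if_pos (ZMod.val_lt i0)]
      exact congrArg f (ZMod.natCast_rightInverse i0)
    · obtain ⟨k, hk, rfl⟩ := Finset.mem_image.mp hbD
      have hkn : k < n := Finset.mem_range.mp hk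
      refine ⟨((m + k : ℕ) : ZMod M), ?_⟩
      have h1 : ((m + k : ℕ) : ZMod M).val = m + k :=
        ZMod.val_cast_of_lt (by omega)
      simp only [hf', h1]
      rw [if_neg (by omega)]
      congr 1
      omega
  have hf'inj : Function.Injective f' := by
    intro i j hij
    simp only [hf'] at hij
    have hvi := hMval i
    have hvj := hMval j
    apply ZMod.val_injective
    split_ifs at hij with hi hj hj
    · have := congrArg ZMod.val (hinj hij)
      rwa [ZMod.val_cast_of_lt hi, ZMod.val_cast_of_lt hj] at this
    · exact absurd (hfX _ (hij ▸ hDmemv (j.val - m))) hvX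
    · exact absurd (hfX _ (hij.symm ▸ hDmemv (i.val - m))) hvX
    · have := hDinj (i.val - m) (j.val - m) (by omega) (by omega) hij
      omega
  -- chain color membership and alternation
  have hcc' : ∀ i : ZMod M, c' i ∈ f' i ∧ c' i ∈ f' (i + 1) := by
    intro i
    have hvi := hMval i
    have hs := hsucc i
    by_cases h1 : i.val < m - 1
    · have hi : i.val < m := by omega
      have hs1 : (i + 1).val = i.val + 1 := by rw [hs, if_pos (by omega)]
      simp only [hf', hc', hs1, if_pos h1, if_pos hi, if_pos (show i.val + 1 < m by omega)]
      refine ⟨(hcc _).1, ?_⟩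
      rw [hcast_succ]
      exact (hcc _).2
    · by_cases h2 : i.val = m - 1
      · have hi : i.val < m := by omega
        have hs1 : (i + 1).val = i.val + 1 := by rw [hs, if_pos (by omega)]
        simp only [hf', hc', hs1, if_neg h1, if_pos h2, if_pos hi,
          if_neg (show ¬ i.val + 1 < m by omega)]
        constructor
        · rw [hw, h2]
          exact (hcc _).1
        · have : i.val + 1 - m = 0 := by omega
          rw [this]
          exact hwD0
      · by_cases h3 : i.val < M - 1
        · have him : m ≤ i.val := by omega
          have hs1 : (i + 1).val = i.val + 1 := by rw [hs, if_pos (by omega)]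
          simp only [hf', hc', hs1, if_neg h1, if_neg h2, if_pos h3,
            if_neg (show ¬ i.val < m by omega), if_neg (show ¬ i.val + 1 < m by omega)]
          have hsub : i.val + 1 - m = (i.val - m) + 1 := by omega
          rw [hsub]
          simp only [he]
          split_ifs with hpar
          · exact ⟨hDmemv _, hDmemv _⟩
          · constructor
            · simp [hD]
            · simp [hD]
        · have h4 : i.val = M - 1 := by omega
          have hs1 : (i + 1).val = 0 := by rw [hs, if_neg (by omega)]
          simp only [hf', hc', hs1, if_neg h1, if_neg h2, if_neg h3,
            if_neg (show ¬ i.val < m by omega), if_pos (show 0 < m by omega)]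
          constructor
          · have : i.val - m = n - 1 := by omega
            rw [this]
            exact hwDn
          · rw [Nat.cast_zero]
            exact hwf0
  have hne' : ∀ i : ZMod M, c' i ≠ c' (i + 1) := by
    intro i
    have hvi := hMval i
    have hs := hsucc i
    by_cases h1 : i.val < m - 1
    · have hs1 : (i + 1).val = i.val + 1 := by rw [hs, if_pos (by omega)]
      by_cases hb : i.val + 1 < m - 1
      · simp only [hc', hs1, if_pos h1, if_pos hb]
        rw [hcast_succ]
        exact hne _
      · have hb2 : i.val + 1 = m - 1 := by omega
        simp only [hc', hs1, if_pos h1, if_neg (show ¬ i.val + 1 < m - 1 by omega),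
          if_pos hb2]
        rw [hw]
        have : ((m - 1 : ℕ) : ZMod m) = ((i.val : ℕ) : ZMod m) + 1 := by
          rw [← hcast_succ, hb2]
        rw [this]
        exact hne _
    · by_cases h2 : i.val = m - 1
      · have hs1 : (i + 1).val = i.val + 1 := by rw [hs, if_pos (by omega)]
        have hm' : i.val + 1 = m := by omega
        simp only [hc', hs1, if_neg h1, if_pos h2,
          if_neg (show ¬ i.val + 1 < m - 1 by omega),
          if_neg (show ¬ i.val + 1 = m - 1 by omega),
          if_pos (show i.val + 1 < M - 1 by omega)]
        have : i.val + 1 - m = 0 := by omega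
        rw [this, he]
        simp only [Nat.zero_mod, if_pos rfl]
        exact fun hh => hvw hh.symm
      · by_cases h3 : i.val < M - 1
        · have him : m ≤ i.val := by omega
          have hs1 : (i + 1).val = i.val + 1 := by rw [hs, if_pos (by omega)]
          by_cases hb : i.val + 1 < M - 1
          · simp only [hc', hs1, if_neg h1, if_neg h2, if_pos h3,
              if_neg (show ¬ i.val + 1 < m - 1 by omega),
              if_neg (show ¬ i.val + 1 = m - 1 by omega), if_pos hb]
            have hsub : i.val + 1 - m = (i.val - m) + 1 := by omega
            rw [hsub]
            simp only [he]
            split_ifs with p1 p2 p2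
            · omega
            · exact fun hh => hxfv _ hh.symm
            · exact hxfv _
            · omega
          · have hb2 : i.val + 1 = M - 1 := by omega
            simp only [hc', hs1, if_neg h1, if_neg h2, if_pos h3,
              if_neg (show ¬ i.val + 1 < m - 1 by omega),
              if_neg (show ¬ i.val + 1 = m - 1 by omega),
              if_neg (show ¬ i.val + 1 < M - 1 by omega)]
            have hsub : i.val - m = n - 2 := by omega
            rw [hsub]
            simp only [he]
            split_ifs with p1
            · exact hvw
            · intro hh
              have : xf (n - 2 + 1) = xf 0 := by rw [hh, hxf0]
              have := hxf_lt_inj _ _ (by omega) (by omega) this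
              omega
        · have h4 : i.val = M - 1 := by omega
          have hs1 : (i + 1).val = 0 := by rw [hs, if_neg (by omega)]
          simp only [hc', hs1, if_neg h1, if_neg h2, if_neg h3,
            if_pos (show (0:ℕ) < m - 1 by omega)]
          rw [hw, Nat.cast_zero]
          have h0 : (0 : ZMod m) = ((m - 1 : ℕ) : ZMod m) + 1 := hm10.symm
          rw [h0]
          exact hne _
  have hall' : ∀ x ∈ insert v X, ∃ i : ZMod M, c' i = x := by
    intro x hx
    rcases Finset.mem_insert.mp hx with rfl | hxX
    · refine ⟨((m : ℕ) : ZMod M), ?_⟩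
      have h1 : ((m : ℕ) : ZMod M).val = m := ZMod.val_cast_of_lt (by omega)
      simp only [hc', h1]
      rw [if_neg (by omega), if_neg (by omega), if_pos (by omega)]
      rw [Nat.sub_self, he]
      simp
    · obtain ⟨j, hj⟩ := hall x hxX
      by_cases hjv : j.val < m - 1
      · refine ⟨((j.val : ℕ) : ZMod M), ?_⟩
        have h1 : ((j.val : ℕ) : ZMod M).val = j.val :=
          ZMod.val_cast_of_lt (by omega)
        simp only [hc', h1]
        rw [if_pos hjv]
        rw [ZMod.natCast_rightInverse j]
        exact hj
      · have hjval : j.val = m - 1 := by have := ZMod.val_lt j; omega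
        refine ⟨((m - 1 : ℕ) : ZMod M), ?_⟩
        have h1 : ((m - 1 : ℕ) : ZMod M).val = m - 1 :=
          ZMod.val_cast_of_lt (by omega)
        have hjj : ((m - 1 : ℕ) : ZMod m) = j := by
          rw [← hjval]
          exact ZMod.natCast_rightInverse j
        simp only [hc', h1, lt_irrefl, if_false, if_true]
        rw [hw, hjj]
        exact hj
  refine ⟨insert v X, A', M, f', c', ⟨?_, ?_, ?_⟩,
    ⟨hA'card.symm, hf'mem, hf'surj, hf'inj, hcc', hne'⟩, hall'⟩
  · rw [Finset.card_insert_of_notMem hvX, hXcard]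
  · intro B hB
    rcases Finset.mem_union.mp hB with hBA | hBD
    · obtain ⟨hs1, hs2⟩ := hblocks B hBA
      exact ⟨hs1.trans (Finset.subset_insert _ _), hs2⟩
    · obtain ⟨k, -, rfl⟩ := Finset.mem_image.mp hBD
      exact ⟨hDsub k, hDcard k⟩
  · intro x hx y hy hxy
    have key : ∀ z ∈ X, ∃ B ∈ A', v ∈ B ∧ z ∈ B := by
      intro z hz
      obtain ⟨j, hjlt, hjz⟩ := List.mem_iff_getElem.mp ((hlmem z).mpr hz)
      have hjn : j < n := by rwa [hlen] at hjlt
      refine ⟨D j, Finset.mem_union_right _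
        (Finset.mem_image.mpr ⟨j, Finset.mem_range.mpr hjn, rfl⟩), hDmemv j, ?_⟩
      have hxfj : xf j = z := by
        rw [hxfget]
        simp only [Nat.mod_eq_of_lt hjn]
        exact hjz
      simp [hD, hxfj]
    rcases Finset.mem_insert.mp hx with rfl | hxX
    · rcases Finset.mem_insert.mp hy with rfl | hyX
      · exact absurd rfl hxy
      · exact key y hyX
    · rcases Finset.mem_insert.mp hy with rfl | hyX
      · obtain ⟨B, hB, hvB, hxB⟩ := key x hxX
        exact ⟨B, hB, hxB, hvB⟩
      · obtain ⟨B, hB, hxB, hyB⟩ := hcover x hxX y hyX hxy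
        exact ⟨B, Finset.mem_union_left _ hB, hxB, hyB⟩


lemma cah_nonempty {A : Finset (Finset ℕ)} (h : HasCAHCycle A) : A.Nonempty := by
  rcases h with h | ⟨m, f, c, ⟨hm, hmem, -⟩, -⟩
  · exact Finset.card_pos.mp (by omega)
  · exact ⟨f 0, hmem 0⟩

lemma strongP_all (n : ℕ) (hn : 9 ≤ n) : StrongP n := by
  induction n, hn using Nat.le_induction with
  | base => exact strong_base
  | succ n hn ih => exact strong_step n hn ih

/-- (Filling in Groups) If there exists a c.a.h. `{3}`-GDD of type
`[g 1, …, g t]`, and for each `i` there exists a c.a.h. `(g i, 3, 2)`-covering,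
then there exists a c.a.h. `(∑ i, g i, 3, 2)`-covering. -/
theorem cah_covering_of_fill_in_groups (t : ℕ) (g : Fin t → ℕ)
    (hmaster : CAHThreeGDD (Multiset.map g Finset.univ.val))
    (hfill : ∀ i : Fin t, ∃ (X : Finset ℕ) (A : Finset (Finset ℕ)),
      IsCovering (g i) X A ∧ HasCAHCycle A) :
    ∃ (X : Finset ℕ) (A : Finset (Finset ℕ)),
      IsCovering (∑ i, g i) X A ∧ HasCAHCycle A := by
  obtain ⟨X, G, A, ⟨⟨hG1, hG2, hG3, hG4, hG5⟩, h3⟩, htype, hcah⟩ := hmaster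
  obtain ⟨B, hB⟩ := cah_nonempty hcah
  have hBX : B ⊆ X := hG3 B hB
  obtain ⟨x, y, z, hxy, hxz, hyz, hBeq⟩ := Finset.card_eq_three.mp (h3 B hB)
  have hgrp : ∀ p ∈ B, ∃ gp ∈ G, p ∈ gp := by
    intro p hp
    obtain ⟨gp, ⟨hg1, hg2⟩, -⟩ := hG2 p (hBX hp)
    exact ⟨gp, hg1, hg2⟩
  obtain ⟨gx, hgxG, hxgx⟩ := hgrp x (by simp [hBeq])
  obtain ⟨gy, hgyG, hygy⟩ := hgrp y (by simp [hBeq])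
  obtain ⟨gz, hgzG, hzgz⟩ := hgrp z (by simp [hBeq])
  have key : ∀ a b : ℕ, a ∈ B → b ∈ B → a ≠ b → ∀ ga ∈ G, a ∈ ga → b ∈ ga → False := by
    intro a b haB hbB hab ga hgaG haga hbga
    have hsub : ({a, b} : Finset ℕ) ⊆ B ∩ ga := by
      intro p hp
      rcases Finset.mem_insert.mp hp with rfl | hp
      · exact Finset.mem_inter.mpr ⟨haB, haga⟩
      · rw [Finset.mem_singleton] at hp
        subst hp
        exact Finset.mem_inter.mpr ⟨hbB, hbga⟩
    have h2 : ({a, b} : Finset ℕ).card = 2 := Finset.card_pair hab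
    have := Finset.card_le_card hsub
    have := hG5 B hB ga hgaG
    omega
  have hxyg : gx ≠ gy := by
    intro hh
    exact key x y (by simp [hBeq]) (by simp [hBeq]) hxy gx hgxG hxgx (hh ▸ hygy)
  have hxzg : gx ≠ gz := by
    intro hh
    exact key x z (by simp [hBeq]) (by simp [hBeq]) hxz gx hgxG hxgx (hh ▸ hzgz)
  have hyzg : gy ≠ gz := by
    intro hh
    exact key y z (by simp [hBeq]) (by simp [hBeq]) hyz gy hgyG hygy (hh ▸ hzgz)
  have hGsub : ({gx, gy, gz} : Finset (Finset ℕ)) ⊆ G := by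
    intro p hp
    rcases Finset.mem_insert.mp hp with rfl | hp
    · exact hgxG
    rcases Finset.mem_insert.mp hp with rfl | hp
    · exact hgyG
    rw [Finset.mem_singleton] at hp
    subst hp
    exact hgzG
  have hG3card : 3 ≤ G.card := by
    have h3' : ({gx, gy, gz} : Finset (Finset ℕ)).card = 3 :=
      Finset.card_eq_three.mpr ⟨gx, gy, gz, hxyg, hxzg, hyzg, rfl⟩
    have := Finset.card_le_card hGsub
    omega
  have ht : G.card = t := by
    have hcards := congrArg Multiset.card htype
    simp only [GDDType, Multiset.card_map] at hcards
    simpa using hcards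
  have hgi : ∀ i, 3 ≤ g i := by
    intro i
    obtain ⟨Xi, Ai, ⟨hXi, hbl, -⟩, hcahi⟩ := hfill i
    obtain ⟨Bi, hBi⟩ := cah_nonempty hcahi
    obtain ⟨hs1, hs2⟩ := hbl Bi hBi
    have := Finset.card_le_card hs1
    omega
  have hsum : 9 ≤ ∑ i, g i := by
    have h1 : ∑ _i : Fin t, 3 ≤ ∑ i, g i := Finset.sum_le_sum (fun i _ => hgi i)
    rw [Finset.sum_const, Finset.card_univ, Fintype.card_fin, smul_eq_mul] at h1
    omega
  obtain ⟨X', A', m, f, c, hcov, hcyc, hall⟩ := strongP_all _ hsum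
  refine ⟨X', A', hcov, Or.inr ⟨m, f, c, hcyc, ?_⟩⟩
  rintro p ⟨B1, hB1, B2, hB2, -, hpB1, -⟩
  exact hall p ((hcov.2.1 B1 hB1).1 hpB1)
end

section
/- For every n ∈ {4, 5, 6, 8, 10, 11, 12, 14, 16, 20} there exists a minimum (n,3,2)-covering possessing an alternating hamiltonian cycle. -/
set_option maxRecDepth 8000
set_option maxHeartbeats 2000000



lemma cover_lb (n : ℕ) (X : Finset ℕ) (A : Finset (Finset ℕ))
    (h : IsCovering n X A) : n * (n / 2) ≤ 3 * A.card := by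
  obtain ⟨hX, hB, hcov⟩ := h
  have hpt : ∀ x ∈ X, n / 2 ≤ (A.filter (fun B => x ∈ B)).card := by
    intro x hx
    have hsub : X.erase x ⊆ (A.filter (fun B => x ∈ B)).biUnion (fun B => B.erase x) := by
      intro y hy
      obtain ⟨hyx, hyX⟩ := Finset.mem_erase.mp hy
      obtain ⟨B, hBA, hxB, hyB⟩ := hcov x hx y hyX (Ne.symm hyx)
      exact Finset.mem_biUnion.mpr ⟨B, Finset.mem_filter.mpr ⟨hBA, hxB⟩,
        Finset.mem_erase.mpr ⟨hyx, hyB⟩⟩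
    have h1 : (X.erase x).card ≤ ((A.filter (fun B => x ∈ B)).biUnion (fun B => B.erase x)).card :=
      Finset.card_le_card hsub
    have h2 : ((A.filter (fun B => x ∈ B)).biUnion (fun B => B.erase x)).card ≤
        ∑ B ∈ A.filter (fun B => x ∈ B), (B.erase x).card := Finset.card_biUnion_le
    have h3 : ∑ B ∈ A.filter (fun B => x ∈ B), (B.erase x).card ≤
        ∑ _B ∈ A.filter (fun B => x ∈ B), 2 := by
      apply Finset.sum_le_sum
      intro B hBf
      obtain ⟨hBA, hxB⟩ := Finset.mem_filter.mp hBf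
      have := (hB B hBA).2
      have hcard := Finset.card_erase_of_mem hxB
      omega
    rw [Finset.sum_const, smul_eq_mul] at h3
    have hxn : 1 ≤ n := by
      have := Finset.card_pos.mpr ⟨x, hx⟩; omega
    have herase : (X.erase x).card = n - 1 := by rw [Finset.card_erase_of_mem hx, hX]
    omega
  have hdc : ∑ x ∈ X, (A.filter (fun B => x ∈ B)).card = ∑ B ∈ A, B.card := by
    have : ∀ x, (A.filter (fun B => x ∈ B)).card = ∑ B ∈ A, if x ∈ B then 1 else 0 := by
      intro x; rw [Finset.card_filter]
    simp_rw [this]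
    rw [Finset.sum_comm]
    apply Finset.sum_congr rfl
    intro B hBA
    have hBX := (hB B hBA).1
    rw [← Finset.card_filter, Finset.filter_mem_eq_inter, Finset.inter_eq_right.mpr hBX]
  have hsum3 : ∑ B ∈ A, B.card = 3 * A.card := by
    rw [Finset.sum_congr rfl (fun B h => (hB B h).2), Finset.sum_const, smul_eq_mul, Nat.mul_comm]
  have hlow : n * (n / 2) ≤ ∑ x ∈ X, (A.filter (fun B => x ∈ B)).card := by
    calc n * (n / 2) = ∑ _x ∈ X, n / 2 := by rw [Finset.sum_const, hX, smul_eq_mul]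
    _ ≤ ∑ x ∈ X, (A.filter (fun B => x ∈ B)).card := Finset.sum_le_sum hpt
  omega

lemma covNum_eq (n v : ℕ) (X : Finset ℕ) (A : Finset (Finset ℕ))
    (hc : IsCovering n X A) (hA : A.card = v) (hv : 3 * v < n * (n / 2) + 3) :
    coveringNumber n = v := by
  apply le_antisymm
  · exact Nat.sInf_le ⟨X, A, hc, hA⟩
  · have hne : {m | ∃ X A, IsCovering n X A ∧ A.card = m}.Nonempty := ⟨v, X, A, hc, hA⟩
    apply le_csInf hne
    rintro m ⟨X', A', h', hm⟩
    have := cover_lb n X' A' h'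
    omega

def L4 : List (Finset ℕ) := [{0,2,3}, {0,1,3}, {0,1,2}]
def C4 : List ℕ := [0, 1, 2]

lemma case4 : ∃ (X : Finset ℕ) (A : Finset (Finset ℕ)),
    IsCovering 4 X A ∧ A.card = coveringNumber 4 ∧ HasAltHamCycle A := by
  have hc : IsCovering 4 (Finset.range 4) L4.toFinset := by
    unfold IsCovering; decide
  refine ⟨_, _, hc, ?_, ?_⟩
  · have h := covNum_eq 4 3 _ _ hc (by decide) (by norm_num)
    rw [h]; decide
  · exact Or.inr ⟨3, fun i => L4.getD i.val ∅, fun i => C4.getD i.val 0,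
      by unfold IsAltCycleOn; decide⟩

def L5 : List (Finset ℕ) := [{1,2,4}, {2,3,4}, {0,1,3}, {0,2,4}]
def C5 : List ℕ := [2, 3, 0, 4]

lemma case5 : ∃ (X : Finset ℕ) (A : Finset (Finset ℕ)),
    IsCovering 5 X A ∧ A.card = coveringNumber 5 ∧ HasAltHamCycle A := by
  have hc : IsCovering 5 (Finset.range 5) L5.toFinset := by
    unfold IsCovering; decide
  refine ⟨_, _, hc, ?_, ?_⟩
  · have h := covNum_eq 5 4 _ _ hc (by decide) (by norm_num)
    rw [h]; decide
  · exact Or.inr ⟨4, fun i => L5.getD i.val ∅, fun i => C5.getD i.val 0,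
      by unfold IsAltCycleOn; decide⟩

def L6 : List (Finset ℕ) := [{0,1,3}, {1,2,4}, {1,2,5}, {0,4,5}, {3,4,5}, {0,2,3}]
def C6 : List ℕ := [1, 2, 5, 4, 3, 0]

lemma case6 : ∃ (X : Finset ℕ) (A : Finset (Finset ℕ)),
    IsCovering 6 X A ∧ A.card = coveringNumber 6 ∧ HasAltHamCycle A := by
  have hc : IsCovering 6 (Finset.range 6) L6.toFinset := by
    unfold IsCovering; decide
  refine ⟨_, _, hc, ?_, ?_⟩
  · have h := covNum_eq 6 6 _ _ hc (by decide) (by norm_num)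
    rw [h]; decide
  · exact Or.inr ⟨6, fun i => L6.getD i.val ∅, fun i => C6.getD i.val 0,
      by unfold IsAltCycleOn; decide⟩

def L8 : List (Finset ℕ) := [{1,5,7}, {1,6,7}, {2,5,6}, {2,4,5}, {0,4,7}, {0,1,2}, {1,3,4}, {2,3,7}, {3,6,7}, {0,4,6}, {0,3,5}]
def C8 : List ℕ := [1, 6, 5, 4, 0, 1, 3, 7, 6, 0, 5]

lemma case8 : ∃ (X : Finset ℕ) (A : Finset (Finset ℕ)),
    IsCovering 8 X A ∧ A.card = coveringNumber 8 ∧ HasAltHamCycle A := by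
  have hc : IsCovering 8 (Finset.range 8) L8.toFinset := by
    unfold IsCovering; decide
  refine ⟨_, _, hc, ?_, ?_⟩
  · have h := covNum_eq 8 11 _ _ hc (by decide) (by norm_num)
    rw [h]; decide
  · exact Or.inr ⟨11, fun i => L8.getD i.val ∅, fun i => C8.getD i.val 0,
      by unfold IsAltCycleOn; decide⟩

def L10 : List (Finset ℕ) := [{1,7,8}, {0,6,8}, {0,3,4}, {3,5,6}, {1,2,6}, {1,3,9}, {3,4,8}, {1,4,7}, {0,3,7}, {0,1,5}, {2,5,7}, {2,4,6}, {4,5,9}, {0,2,9}, {2,3,8}, {5,8,9}, {6,7,9}]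
def C10 : List ℕ := [8, 0, 3, 6, 1, 3, 4, 7, 0, 5, 2, 4, 9, 2, 8, 9, 7]

lemma case10 : ∃ (X : Finset ℕ) (A : Finset (Finset ℕ)),
    IsCovering 10 X A ∧ A.card = coveringNumber 10 ∧ HasAltHamCycle A := by
  have hc : IsCovering 10 (Finset.range 10) L10.toFinset := by
    unfold IsCovering; decide
  refine ⟨_, _, hc, ?_, ?_⟩
  · have h := covNum_eq 10 17 _ _ hc (by decide) (by norm_num)
    rw [h]; decide
  · exact Or.inr ⟨17, fun i => L10.getD i.val ∅, fun i => C10.getD i.val 0,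
      by unfold IsAltCycleOn; decide⟩

def L11 : List (Finset ℕ) := [{7,9,10}, {0,4,7}, {0,8,10}, {1,7,8}, {2,6,7}, {4,6,9}, {3,4,8}, {0,3,6}, {5,6,8}, {0,2,5}, {1,2,3}, {0,1,9}, {2,8,9}, {2,4,10}, {5,7,10}, {1,4,5}, {1,6,10}, {3,7,10}, {3,5,9}]
def C11 : List ℕ := [7, 0, 8, 7, 6, 4, 3, 6, 5, 2, 1, 9, 2, 10, 5, 1, 10, 3, 9]

lemma case11 : ∃ (X : Finset ℕ) (A : Finset (Finset ℕ)),
    IsCovering 11 X A ∧ A.card = coveringNumber 11 ∧ HasAltHamCycle A := by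
  have hc : IsCovering 11 (Finset.range 11) L11.toFinset := by
    unfold IsCovering; decide
  refine ⟨_, _, hc, ?_, ?_⟩
  · have h := covNum_eq 11 19 _ _ hc (by decide) (by norm_num)
    rw [h]; decide
  · exact Or.inr ⟨19, fun i => L11.getD i.val ∅, fun i => C11.getD i.val 0,
      by unfold IsAltCycleOn; decide⟩

def L12 : List (Finset ℕ) := [{1,8,10}, {0,9,10}, {3,6,9}, {6,8,11}, {3,10,11}, {2,7,10}, {2,9,11}, {1,5,11}, {1,3,6}, {3,7,8}, {1,7,11}, {1,4,9}, {4,5,10}, {4,5,6}, {0,4,11}, {0,1,2}, {2,5,8}, {5,7,9}, {0,8,9}, {0,3,5}, {2,3,4}, {2,6,10}, {0,6,7}, {4,7,8}]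
def C12 : List ℕ := [10, 9, 6, 11, 10, 2, 11, 1, 3, 7, 1, 4, 5, 4, 0, 2, 5, 9, 0, 3, 2, 6, 7, 8]

lemma case12 : ∃ (X : Finset ℕ) (A : Finset (Finset ℕ)),
    IsCovering 12 X A ∧ A.card = coveringNumber 12 ∧ HasAltHamCycle A := by
  have hc : IsCovering 12 (Finset.range 12) L12.toFinset := by
    unfold IsCovering; decide
  refine ⟨_, _, hc, ?_, ?_⟩
  · have h := covNum_eq 12 24 _ _ hc (by decide) (by norm_num)
    rw [h]; decide
  · exact Or.inr ⟨24, fun i => L12.getD i.val ∅, fun i => C12.getD i.val 0,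
      by unfold IsAltCycleOn; decide⟩

def L14 : List (Finset ℕ) := [{2,10,13}, {5,9,13}, {0,5,12}, {1,10,12}, {4,9,10}, {4,5,8}, {3,8,12}, {1,3,6}, {1,9,13}, {6,10,13}, {6,9,11}, {1,8,11}, {2,8,9}, {0,3,9}, {0,8,13}, {4,11,13}, {4,6,12}, {7,9,12}, {0,4,7}, {0,10,11}, {3,7,11}, {7,8,10}, {6,7,8}, {0,2,6}, {1,2,7}, {5,7,13}, {3,5,10}, {3,12,13}, {2,11,12}, {2,3,4}, {0,1,4}, {1,5,11}, {2,5,6}]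
def C14 : List ℕ := [13, 5, 12, 10, 4, 8, 3, 1, 13, 6, 11, 8, 9, 0, 13, 4, 12, 7, 0, 11, 7, 8, 6, 2, 7, 5, 3, 12, 2, 4, 1, 5, 2]

lemma case14 : ∃ (X : Finset ℕ) (A : Finset (Finset ℕ)),
    IsCovering 14 X A ∧ A.card = coveringNumber 14 ∧ HasAltHamCycle A := by
  have hc : IsCovering 14 (Finset.range 14) L14.toFinset := by
    unfold IsCovering; decide
  refine ⟨_, _, hc, ?_, ?_⟩
  · have h := covNum_eq 14 33 _ _ hc (by decide) (by norm_num)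
    rw [h]; decide
  · exact Or.inr ⟨33, fun i => L14.getD i.val ∅, fun i => C14.getD i.val 0,
      by unfold IsAltCycleOn; decide⟩

def L16 : List (Finset ℕ) := [{4,6,10}, {0,5,10}, {5,6,8}, {6,7,9}, {2,4,7}, {2,3,8}, {0,3,11}, {1,9,11}, {1,13,15}, {8,9,15}, {4,9,14}, {3,6,14}, {3,4,12}, {4,8,13}, {1,8,10}, {0,1,4}, {0,12,15}, {0,7,12}, {0,6,13}, {1,3,13}, {1,7,14}, {0,8,14}, {7,8,12}, {9,10,12}, {3,5,9}, {4,5,15}, {5,7,15}, {1,5,12}, {9,12,13}, {0,2,9}, {2,10,15}, {10,13,14}, {5,11,14}, {6,11,15}, {3,14,15}, {2,12,14}, {2,8,11}, {6,11,12}, {1,2,6}, {2,5,13}, {7,11,13}, {3,7,10}, {4,10,11}]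
def C16 : List ℕ := [10, 5, 6, 7, 2, 3, 11, 1, 15, 9, 14, 3, 4, 8, 1, 0, 12, 0, 13, 1, 14, 8, 12, 9, 5, 15, 5, 12, 9, 2, 10, 14, 11, 15, 14, 2, 11, 6, 2, 13, 7, 10, 4]

lemma case16 : ∃ (X : Finset ℕ) (A : Finset (Finset ℕ)),
    IsCovering 16 X A ∧ A.card = coveringNumber 16 ∧ HasAltHamCycle A := by
  have hc : IsCovering 16 (Finset.range 16) L16.toFinset := by
    unfold IsCovering; decide
  refine ⟨_, _, hc, ?_, ?_⟩
  · have h := covNum_eq 16 43 _ _ hc (by decide) (by norm_num)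
    rw [h]; decide
  · exact Or.inr ⟨43, fun i => L16.getD i.val ∅, fun i => C16.getD i.val 0,
      by unfold IsAltCycleOn; decide⟩

def L20 : List (Finset ℕ) := [{2,5,10}, {7,8,10}, {8,13,14}, {0,6,14}, {6,16,19}, {0,9,19}, {4,5,9}, {3,5,18}, {0,7,18}, {0,10,15}, {10,18,19}, {2,3,19}, {3,14,16}, {9,10,16}, {1,6,9}, {1,11,15}, {8,15,18}, {11,16,18}, {6,10,11}, {4,6,17}, {1,7,17}, {1,3,10}, {10,14,17}, {13,15,17}, {0,2,13}, {2,8,17}, {8,13,16}, {4,13,18}, {1,4,8}, {8,12,19}, {7,12,16}, {3,7,11}, {2,11,14}, {1,14,18}, {2,6,18}, {6,13,19}, {1,9,13}, {8,9,11}, {3,6,8}, {0,3,4}, {0,16,17}, {5,17,18}, {9,12,18}, {3,12,13}, {3,9,17}, {2,9,15}, {3,12,15}, {2,11,12}, {11,17,19}, {7,15,19}, {6,12,15}, {5,12,16}, {5,11,13}, {0,4,11}, {0,5,8}, {1,5,19}, {0,1,12}, {12,14,17}, {5,14,15}, {4,15,16}, {1,2,16}, {2,4,7}, {7,9,14}, {4,14,19},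 {4,10,12}, {7,10,13}, {5,6,7}]
def C20 : List ℕ := [10, 8, 14, 6, 19, 9, 5, 18, 0, 10, 19, 3, 16, 9, 1, 15, 18, 11, 6, 17, 1, 10, 17, 13, 2, 8, 13, 4, 8, 12, 7, 11, 14, 18, 6, 13, 9, 8, 3, 0, 17, 18, 12, 3, 9, 15, 12, 11, 19, 15, 12, 5, 11, 0, 5, 1, 12, 14, 15, 16, 2, 7, 14, 4, 10, 7, 5]

lemma case20 : ∃ (X : Finset ℕ) (A : Finset (Finset ℕ)),
    IsCovering 20 X A ∧ A.card = coveringNumber 20 ∧ HasAltHamCycle A := by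
  have hc : IsCovering 20 (Finset.range 20) L20.toFinset := by
    unfold IsCovering; decide
  refine ⟨_, _, hc, ?_, ?_⟩
  · have h := covNum_eq 20 67 _ _ hc (by decide) (by norm_num)
    rw [h]; decide
  · exact Or.inr ⟨67, fun i => L20.getD i.val ∅, fun i => C20.getD i.val 0,
      by unfold IsAltCycleOn; decide⟩

/-- For every `n ∈ {4, 5, 6, 8, 10, 11, 12, 14, 16, 20}` there exists a minimum
`(n,3,2)`-covering possessing an alternating hamiltonian cycle. -/
theorem exists_alt_ham_min_covering_small
    (n : ℕ) (hn : n ∈ ({4, 5, 6, 8, 10, 11, 12, 14, 16, 20} : Finset ℕ)) :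
    ∃ (X : Finset ℕ) (A : Finset (Finset ℕ)),
      IsCovering n X A ∧ A.card = coveringNumber n ∧ HasAltHamCycle A := by
  fin_cases hn
  · exact case4
  · exact case5
  · exact case6
  · exact case8
  · exact case10
  · exact case11
  · exact case12
  · exact case14
  · exact case16
  · exact case20
end

section
/- For every t ∈ {3, 4, 5, 6, 8} there exists a c.a.h. {3}-GDD of type 6^t (t groups of size 6). -/
/-!
Each case is witnessed by an explicit design on `{0, …, 6t - 1}` with the intervals
`{6k, …, 6k + 5}` as groups, whose blocks are listed in the order of a c.a.h. cycle, and is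
verified by evaluation in the kernel. Encoding a pair `x < y` as the bit `x N + y` of a natural
number turns "every pair of points from different groups lies in exactly one block" into "the
pair masks of the blocks are pairwise disjoint and their union is the mask of all such pairs",
a computation on a few large numbers.
-/

namespace CAHCertificate

def intervalGroup (g k : ℕ) : Finset ℕ := Finset.Ico (k * g) (k * g + g)

def intervalGroups (g t : ℕ) : Finset (Finset ℕ) := (Finset.range t).image (intervalGroup g)

section IntervalGroups

variable {g : ℕ}

theorem mem_intervalGroup (hg : 0 < g) {x k : ℕ} : x ∈ intervalGroup g k ↔ x / g = k := by
  rw [intervalGroup, Finset.mem_Ico, Nat.div_eq_iff hg]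
  omega

theorem card_intervalGroup (k : ℕ) : (intervalGroup g k).card = g := by
  simp [intervalGroup]

theorem intervalGroup_injective (hg : 0 < g) : Function.Injective (intervalGroup g) := by
  intro k k' h
  have hk : k * g ∈ intervalGroup g k := (mem_intervalGroup hg).mpr (Nat.mul_div_cancel k hg)
  rw [h, mem_intervalGroup hg, Nat.mul_div_cancel k hg] at hk
  exact hk

theorem gddType_intervalGroups (hg : 0 < g) (t : ℕ) :
    GDDType (intervalGroups g t) = Multiset.replicate t g := by
  refine Multiset.eq_replicate.mpr ⟨?_, ?_⟩
  · rw [GDDType, Multiset.card_map, ← Finset.card_def, intervalGroups,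
      Finset.card_image_of_injective _ (intervalGroup_injective hg), Finset.card_range]
  · simp [GDDType, intervalGroups, card_intervalGroup]

theorem isGDD_intervalGroups (hg : 0 < g) {t : ℕ} {A : Finset (Finset ℕ)}
    (hsub : ∀ B ∈ A, B ⊆ Finset.range (g * t))
    (hcover : ∀ x y, x < y → y < g * t → x / g ≠ y / g → ∃! B, B ∈ A ∧ x ∈ B ∧ y ∈ B)
    (htransversal : ∀ B ∈ A, ∀ x ∈ B, ∀ y ∈ B, x / g = y / g → x = y) :
    IsGDD (Finset.range (g * t)) (intervalGroups g t) A := by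
  have hmemG : ∀ G, G ∈ intervalGroups g t ↔ ∃ k < t, intervalGroup g k = G := by
    simp [intervalGroups]
  have hlt : ∀ x, x < g * t ↔ x / g < t := fun x => by
    rw [Nat.div_lt_iff_lt_mul hg, Nat.mul_comm]
  refine ⟨?_, ?_, hsub, ?_, ?_⟩
  · rintro _ hG
    obtain ⟨k, hk, rfl⟩ := (hmemG _).mp hG
    refine ⟨fun x hx => ?_, ⟨k * g, (mem_intervalGroup hg).mpr (Nat.mul_div_cancel k hg)⟩⟩
    rw [mem_intervalGroup hg] at hx
    rw [Finset.mem_range, hlt, hx]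
    exact hk
  · intro x hx
    rw [Finset.mem_range, hlt] at hx
    refine ⟨intervalGroup g (x / g),
      ⟨(hmemG _).mpr ⟨_, hx, rfl⟩, (mem_intervalGroup hg).mpr rfl⟩, ?_⟩
    rintro _ ⟨hG, hxG⟩
    obtain ⟨k, -, rfl⟩ := (hmemG _).mp hG
    rw [(mem_intervalGroup hg).mp hxG]
  · intro x hx y hy hxy hsep
    rw [Finset.mem_range] at hx hy
    have hdiff : x / g ≠ y / g := fun h => hsep _ ((hmemG _).mpr ⟨x / g, (hlt x).mp hx, rfl⟩)
      ⟨(mem_intervalGroup hg).mpr rfl, (mem_intervalGroup hg).mpr h.symm⟩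
    rcases Nat.lt_or_gt_of_ne hxy with h | h
    · exact hcover x y h hy hdiff
    · simpa only [and_comm (a := x ∈ _)] using hcover y x h hx hdiff.symm
  · intro B hB G hG
    obtain ⟨k, -, rfl⟩ := (hmemG _).mp hG
    refine Finset.card_le_one.mpr fun x hx y hy => ?_
    rw [Finset.mem_inter, mem_intervalGroup hg] at hx hy
    exact htransversal B hB x hx.1 y hy.1 (hx.2.trans hy.2.symm)

end IntervalGroups

def IsLinkedCycle (L : List (Finset ℕ)) (c : List ℕ) : Prop :=
  ∀ i < L.length, c.getD i 0 ∈ L.getD i ∅ ∧ c.getD i 0 ∈ L.getD ((i + 1) % L.length) ∅ ∧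
    c.getD i 0 ≠ c.getD ((i + 1) % L.length) 0

section Cycles

variable {L : List (Finset ℕ)} {c : List ℕ}

theorem isAltCycleOn_of_isLinkedCycle (hL : L.Nodup) [NeZero L.length]
    (hcycle : IsLinkedCycle L c) :
    IsAltCycleOn L.toFinset L.length (fun i => L.getD i.val ∅) (fun i => c.getD i.val 0) := by
  have hget : ∀ i : ZMod L.length, L.getD i.val ∅ = L[i.val]'(ZMod.val_lt i) :=
    fun i => List.getD_eq_getElem _ _ _
  have hsucc : ∀ i : ZMod L.length, (i + 1).val = (i.val + 1) % L.length := fun i => by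
    rw [ZMod.val_add, ZMod.val_one_eq_one_mod, Nat.add_mod_mod]
  refine ⟨(List.toFinset_card_of_nodup hL).symm, fun i => ?_, fun B hB => ?_, fun i j hij => ?_,
    fun i => ?_, fun i => ?_⟩
  · dsimp only
    rw [hget, List.mem_toFinset]
    exact List.getElem_mem _
  · obtain ⟨j, hj, rfl⟩ := List.getElem_of_mem (List.mem_toFinset.mp hB)
    refine ⟨(j : ZMod L.length), ?_⟩
    simp only [ZMod.val_natCast, Nat.mod_eq_of_lt hj, List.getD_eq_getElem _ _ hj]
  · dsimp only at hij
    rw [hget, hget] at hij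
    exact ZMod.val_injective _ ((hL.getElem_inj_iff).mp hij)
  · have := hcycle i.val (ZMod.val_lt i)
    dsimp only
    rw [hsucc]
    exact ⟨this.1, this.2.1⟩
  · dsimp only
    rw [hsucc]
    exact (hcycle i.val (ZMod.val_lt i)).2.2

theorem colorfulOn_of_list (hc : c.length = L.length) (hcol : ∀ B ∈ L, ∀ x ∈ B, x ∈ c) :
    ColorfulOn L.toFinset L.length (fun i => c.getD i.val 0) := by
  rintro x ⟨B, hB, -, -, -, hxB, -⟩
  obtain ⟨j, hj, rfl⟩ := List.getElem_of_mem (hcol B (List.mem_toFinset.mp hB) x hxB)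
  refine ⟨(j : ZMod L.length), ?_⟩
  simp only [ZMod.val_natCast, Nat.mod_eq_of_lt (hc ▸ hj), List.getD_eq_getElem _ _ hj]

theorem hasCAHCycle_of_isLinkedCycle (hL : L.Nodup) (hne : L ≠ []) (hcycle : IsLinkedCycle L c)
    (hc : c.length = L.length) (hcol : ∀ B ∈ L, ∀ x ∈ B, x ∈ c) : HasCAHCycle L.toFinset := by
  have : NeZero L.length := ⟨List.length_pos_iff.mpr hne |>.ne'⟩
  exact Or.inr ⟨_, _, _, isAltCycleOn_of_isLinkedCycle hL hcycle, colorfulOn_of_list hc hcol⟩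

end Cycles

section Bitsets

def bitset (l : List ℕ) : ℕ := l.foldr (fun k m => 2 ^ k ||| m) 0

theorem testBit_bitset (l : List ℕ) (k : ℕ) : (bitset l).testBit k = true ↔ k ∈ l := by
  induction l with
  | nil => simp [bitset]
  | cons j l ih =>
    rw [bitset, List.foldr_cons, ← bitset, Nat.testBit_lor, Bool.or_eq_true, ih,
      Nat.testBit_two_pow, decide_eq_true_eq, List.mem_cons, eq_comm]

def disjointUnion : List ℕ → Option ℕ
  | [] => some 0
  | m :: ms => (disjointUnion ms).bind fun u => if m &&& u = 0 then some (m ||| u) else none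

def BitsDisjoint (m m' : ℕ) : Prop := ∀ k, ¬(m.testBit k = true ∧ m'.testBit k = true)

theorem disjointUnion_cons_eq_some {m : ℕ} {ms : List ℕ} {u : ℕ}
    (h : disjointUnion (m :: ms) = some u) :
    ∃ u', disjointUnion ms = some u' ∧ BitsDisjoint m u' ∧ u = m ||| u' := by
  simp only [disjointUnion, Option.bind_eq_some_iff, Option.ite_none_right_eq_some,
    Option.some.injEq] at h
  obtain ⟨u', hu', hdisj, rfl⟩ := h
  refine ⟨u', hu', fun k hk => ?_, rfl⟩
  simpa [Nat.testBit_land, hk.1, hk.2] using congrArg (Nat.testBit · k) hdisj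

theorem testBit_of_disjointUnion_eq_some :
    ∀ {ms : List ℕ} {u : ℕ}, disjointUnion ms = some u →
      ∀ k, u.testBit k = true ↔ ∃ m ∈ ms, m.testBit k = true
  | [], u, h, k => by simp [← Option.some.inj h]
  | m :: ms, u, h, k => by
    obtain ⟨u', hu', -, rfl⟩ := disjointUnion_cons_eq_some h
    simp [testBit_of_disjointUnion_eq_some hu']

theorem pairwise_bitsDisjoint_of_disjointUnion_eq_some :
    ∀ {ms : List ℕ} {u : ℕ}, disjointUnion ms = some u → ms.Pairwise BitsDisjoint
  | [], _, _ => List.Pairwise.nil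
  | m :: ms, u, h => by
    obtain ⟨u', hu', hdisj, -⟩ := disjointUnion_cons_eq_some h
    refine List.Pairwise.cons (fun m' hm' k hk => hdisj k ⟨hk.1, ?_⟩)
      (pairwise_bitsDisjoint_of_disjointUnion_eq_some hu')
    exact (testBit_of_disjointUnion_eq_some hu' k).mpr ⟨m', hm', hk.2⟩

end Bitsets

theorem eq_and_eq_of_mul_add_eq {N x y x' y' : ℕ} (hy : y < N) (hy' : y' < N)
    (h : x * N + y = x' * N + y') : x = x' ∧ y = y' := by
  have hN : 0 < N := by omega
  have hdecode : ∀ x y, y < N → (x * N + y) / N = x ∧ (x * N + y) % N = y := fun x y hy =>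
    (Nat.div_mod_unique hN).mpr ⟨by ring, hy⟩
  obtain ⟨hx, hy⟩ := hdecode x y hy
  obtain ⟨hx', hy'⟩ := hdecode x' y' hy'
  rw [h] at hx hy
  exact ⟨hx.symm.trans hx', hy.symm.trans hy'⟩

structure Triple where
  a : ℕ
  b : ℕ
  c : ℕ

namespace Triple

def toList (p : Triple) : List ℕ := [p.a, p.b, p.c]

def toFinset (p : Triple) : Finset ℕ := p.toList.toFinset

def IsSortedBelow (N : ℕ) (p : Triple) : Prop := p.a < p.b ∧ p.b < p.c ∧ p.c < N

instance (N : ℕ) : DecidablePred (IsSortedBelow N) :=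
  fun _ => inferInstanceAs (Decidable (_ ∧ _ ∧ _))

/-- The pair `x < y` of points below `N` is recorded as bit `x * N + y`. -/
def pairMask (N : ℕ) (p : Triple) : ℕ := bitset [p.a * N + p.b, p.a * N + p.c, p.b * N + p.c]

def commonPoint (p q : Triple) : ℕ := (p.toList.find? (· ∈ q.toList)).getD 0

variable {N : ℕ} {p : Triple}

theorem mem_toFinset {x : ℕ} : x ∈ p.toFinset ↔ x ∈ p.toList := List.mem_toFinset

theorem lt_of_mem_toList (hp : p.IsSortedBelow N) {x : ℕ} (hx : x ∈ p.toList) : x < N := by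
  simp only [toList, List.mem_cons, List.not_mem_nil, or_false] at hx
  obtain ⟨h1, h2, h3⟩ := hp
  omega

theorem card_toFinset (hp : p.IsSortedBelow N) : p.toFinset.card = 3 := by
  obtain ⟨h1, h2, -⟩ := hp
  rw [toFinset, List.toFinset_card_of_nodup (by simp [toList]; omega)]
  rfl

theorem testBit_pairMask (hp : p.IsSortedBelow N) {x y : ℕ} (hy : y < N) :
    (p.pairMask N).testBit (x * N + y) = true ↔ x < y ∧ x ∈ p.toList ∧ y ∈ p.toList := by
  obtain ⟨h1, h2, h3⟩ := hp
  simp only [pairMask, testBit_bitset, toList, List.mem_cons, List.not_mem_nil, or_false]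
  constructor
  · rintro (h | h | h) <;>
      obtain ⟨rfl, rfl⟩ := eq_and_eq_of_mul_add_eq hy (by omega) h <;> omega
  · rintro ⟨hxy, hx | hx | hx, hy | hy | hy⟩ <;> subst x y <;> omega

end Triple

open Triple

def crossPairMask (g N : ℕ) : ℕ :=
  bitset <| (List.range N).flatMap fun y =>
    (List.range y).filterMap fun x => if x / g ≠ y / g then some (x * N + y) else none

theorem testBit_crossPairMask {g N x y : ℕ} (hy : y < N) :
    (crossPairMask g N).testBit (x * N + y) = true ↔ x < y ∧ x / g ≠ y / g := by
  simp only [crossPairMask, testBit_bitset, List.mem_flatMap, List.mem_range,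
    List.mem_filterMap, Option.ite_none_right_eq_some, Option.some.injEq]
  constructor
  · rintro ⟨y', hy', x', hx', hne, h⟩
    obtain ⟨rfl, rfl⟩ := eq_and_eq_of_mul_add_eq hy' hy h
    exact ⟨hx', hne⟩
  · rintro ⟨hxy, hne⟩
    exact ⟨y, hy, x, hxy, hne, rfl⟩

/-- In a linear space two blocks meet in at most one point, so the chosen points of an
alternating cycle are determined by the cyclic order of its blocks. -/
def linkPoints (Bs : List Triple) : List ℕ := List.zipWith commonPoint Bs (Bs.rotate 1)

def IsCertificate (g t : ℕ) (Bs : List Triple) : Prop :=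
  Bs ≠ [] ∧ (∀ p ∈ Bs, p.IsSortedBelow (g * t)) ∧
  disjointUnion (Bs.map (pairMask (g * t))) = some (crossPairMask g (g * t)) ∧
  IsLinkedCycle (Bs.map toFinset) (linkPoints Bs) ∧
  ∀ x < g * t, x ∈ linkPoints Bs

instance (g t : ℕ) (Bs : List Triple) : Decidable (IsCertificate g t Bs) := by
  unfold IsCertificate IsLinkedCycle; infer_instance

section Soundness

variable {g N : ℕ} {Bs : List Triple}

theorem exists_mem_pair_iff (hsorted : ∀ p ∈ Bs, p.IsSortedBelow N)
    (hcover : disjointUnion (Bs.map (pairMask N)) = some (crossPairMask g N))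
    {x y : ℕ} (hxy : x < y) (hy : y < N) :
    (∃ p ∈ Bs, x ∈ p.toList ∧ y ∈ p.toList) ↔ x / g ≠ y / g := by
  rw [← (testBit_crossPairMask hy).trans (and_iff_right hxy),
    testBit_of_disjointUnion_eq_some hcover]
  simp only [List.mem_map, exists_exists_and_eq_and]
  refine exists_congr fun p => and_congr_right fun hp => ?_
  rw [testBit_pairMask (hsorted p hp) hy, and_iff_right hxy]

theorem pairwise_bitsDisjoint_pairMask
    (hcover : disjointUnion (Bs.map (pairMask N)) = some (crossPairMask g N)) :
    Bs.Pairwise fun p q => BitsDisjoint (p.pairMask N) (q.pairMask N) :=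
  List.pairwise_map.mp (pairwise_bitsDisjoint_of_disjointUnion_eq_some hcover)

theorem eq_of_mem_pair (hsorted : ∀ p ∈ Bs, p.IsSortedBelow N)
    (hcover : disjointUnion (Bs.map (pairMask N)) = some (crossPairMask g N))
    {p q : Triple} (hp : p ∈ Bs) (hq : q ∈ Bs) {x y : ℕ} (hxy : x < y)
    (hxp : x ∈ p.toList) (hyp : y ∈ p.toList) (hxq : x ∈ q.toList) (hyq : y ∈ q.toList) :
    p = q := by
  by_contra hne
  have : Std.Symm fun p q : Triple => BitsDisjoint (p.pairMask N) (q.pairMask N) :=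
    ⟨fun _ _ h k hk => h k hk.symm⟩
  have hy := lt_of_mem_toList (hsorted p hp) hyp
  exact (pairwise_bitsDisjoint_pairMask hcover).forall hp hq hne (x * N + y)
    ⟨(testBit_pairMask (hsorted p hp) hy).mpr ⟨hxy, hxp, hyp⟩,
      (testBit_pairMask (hsorted q hq) hy).mpr ⟨hxy, hxq, hyq⟩⟩

theorem nodup_map_toFinset (hsorted : ∀ p ∈ Bs, p.IsSortedBelow N)
    (hcover : disjointUnion (Bs.map (pairMask N)) = some (crossPairMask g N)) :
    (Bs.map toFinset).Nodup := by
  refine List.pairwise_map.mpr ((pairwise_bitsDisjoint_pairMask hcover).imp_of_mem ?_)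
  intro p q hp hq hdisj hpq
  have hmem : ∀ x ∈ p.toList, x ∈ q.toList := fun x hx => by
    rw [← mem_toFinset, ← hpq, mem_toFinset]
    exact hx
  obtain ⟨hab, hbc, hcN⟩ := hsorted p hp
  have hpa : p.a ∈ p.toList := by simp [Triple.toList]
  have hpb : p.b ∈ p.toList := by simp [Triple.toList]
  exact hdisj (p.a * N + p.b)
    ⟨(testBit_pairMask (hsorted p hp) (by omega)).mpr ⟨hab, hpa, hpb⟩,
      (testBit_pairMask (hsorted q hq) (by omega)).mpr ⟨hab, hmem _ hpa, hmem _ hpb⟩⟩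

theorem isThreeGDD_of_disjointUnion_eq_crossPairMask {t : ℕ} (hg : 0 < g)
    (hsorted : ∀ p ∈ Bs, p.IsSortedBelow (g * t))
    (hcover : disjointUnion (Bs.map (pairMask (g * t))) = some (crossPairMask g (g * t))) :
    IsThreeGDD (Finset.range (g * t)) (intervalGroups g t) (Bs.map toFinset).toFinset := by
  have hmemA : ∀ B, B ∈ (Bs.map toFinset).toFinset ↔ ∃ p ∈ Bs, p.toFinset = B := by simp
  refine ⟨isGDD_intervalGroups hg ?_ ?_ ?_, ?_⟩
  · rintro _ hB x hx
    obtain ⟨p, hp, rfl⟩ := (hmemA _).mp hB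
    exact Finset.mem_range.mpr (lt_of_mem_toList (hsorted p hp) (mem_toFinset.mp hx))
  · intro x y hxy hy hdiff
    obtain ⟨p, hp, hxp, hyp⟩ := (exists_mem_pair_iff hsorted hcover hxy hy).mpr hdiff
    refine ⟨p.toFinset,
      ⟨(hmemA _).mpr ⟨p, hp, rfl⟩, mem_toFinset.mpr hxp, mem_toFinset.mpr hyp⟩, ?_⟩
    rintro _ ⟨hB, hxq, hyq⟩
    obtain ⟨q, hq, rfl⟩ := (hmemA _).mp hB
    rw [eq_of_mem_pair hsorted hcover hq hp hxy (mem_toFinset.mp hxq) (mem_toFinset.mp hyq) hxp hyp]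
  · rintro _ hB x hx y hy hxy
    obtain ⟨p, hp, rfl⟩ := (hmemA _).mp hB
    have hpair : ∀ {u v}, u ∈ p.toList → v ∈ p.toList → u < v → u / g ≠ v / g :=
      fun hu hv huv => (exists_mem_pair_iff hsorted hcover huv
        (lt_of_mem_toList (hsorted p hp) hv)).mp ⟨p, hp, hu, hv⟩
    by_contra hne
    rcases Nat.lt_or_gt_of_ne hne with h | h
    · exact hpair (mem_toFinset.mp hx) (mem_toFinset.mp hy) h hxy
    · exact hpair (mem_toFinset.mp hy) (mem_toFinset.mp hx) h hxy.symm
  · intro B hB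
    obtain ⟨p, hp, rfl⟩ := (hmemA _).mp hB
    exact card_toFinset (hsorted p hp)

theorem hasCAHCycle_of_isCertificate {t : ℕ} (h : IsCertificate g t Bs) :
    HasCAHCycle (Bs.map toFinset).toFinset := by
  obtain ⟨hne, hsorted, hcover, hcycle, hcol⟩ := h
  refine hasCAHCycle_of_isLinkedCycle (nodup_map_toFinset hsorted hcover) (by simpa using hne)
    hcycle (by simp [linkPoints]) ?_
  rintro _ hB x hx
  obtain ⟨p, hp, rfl⟩ := List.mem_map.mp hB
  exact hcol x (lt_of_mem_toList (hsorted p hp) (mem_toFinset.mp hx))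

theorem cahThreeGDD_of_isCertificate {t : ℕ} (hg : 0 < g) (h : IsCertificate g t Bs) :
    CAHThreeGDD (Multiset.replicate t g) :=
  ⟨_, _, _, isThreeGDD_of_disjointUnion_eq_crossPairMask hg h.2.1 h.2.2.1,
    gddType_intervalGroups hg t, hasCAHCycle_of_isCertificate h⟩

end Soundness

def sixPowCycle : ℕ → List Triple
  | 3 =>
    [⟨3, 8, 15⟩, ⟨3, 6, 14⟩, ⟨1, 11, 14⟩, ⟨1, 10, 12⟩, ⟨2, 10, 16⟩, ⟨5, 7, 16⟩, ⟨5, 6, 12⟩,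
      ⟨0, 7, 12⟩, ⟨0, 10, 17⟩, ⟨3, 10, 13⟩, ⟨3, 11, 16⟩, ⟨5, 11, 17⟩, ⟨5, 9, 14⟩, ⟨4, 9, 16⟩,
      ⟨0, 6, 16⟩, ⟨2, 6, 15⟩, ⟨2, 7, 14⟩, ⟨1, 7, 13⟩, ⟨4, 6, 13⟩, ⟨1, 6, 17⟩, ⟨2, 9, 17⟩,
      ⟨2, 11, 13⟩, ⟨4, 11, 12⟩, ⟨4, 7, 15⟩, ⟨3, 7, 17⟩, ⟨4, 8, 17⟩, ⟨4, 10, 14⟩, ⟨5, 10, 15⟩,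
      ⟨5, 8, 13⟩, ⟨0, 9, 13⟩, ⟨3, 9, 12⟩, ⟨2, 8, 12⟩, ⟨0, 8, 14⟩, ⟨0, 11, 15⟩, ⟨1, 9, 15⟩,
      ⟨1, 8, 16⟩]
  | 4 =>
    [⟨0, 10, 16⟩, ⟨0, 14, 18⟩, ⟨1, 14, 23⟩, ⟨2, 12, 23⟩, ⟨1, 11, 12⟩, ⟨5, 11, 14⟩, ⟨2, 6, 14⟩,
      ⟨6, 15, 22⟩, ⟨3, 14, 22⟩, ⟨3, 11, 17⟩, ⟨4, 11, 23⟩, ⟨4, 8, 13⟩, ⟨1, 13, 21⟩, ⟨0, 15, 21⟩,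
      ⟨4, 10, 15⟩, ⟨4, 9, 14⟩, ⟨7, 14, 20⟩, ⟨11, 15, 20⟩, ⟨11, 16, 22⟩, ⟨1, 10, 22⟩, ⟨1, 8, 20⟩,
      ⟨8, 16, 23⟩, ⟨1, 9, 16⟩, ⟨1, 7, 15⟩, ⟨2, 15, 19⟩, ⟨2, 7, 17⟩, ⟨9, 17, 20⟩, ⟨3, 12, 20⟩,
      ⟨3, 10, 21⟩, ⟨10, 14, 19⟩, ⟨8, 14, 21⟩, ⟨6, 12, 21⟩, ⟨5, 6, 23⟩, ⟨7, 13, 23⟩, ⟨6, 13, 19⟩,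
      ⟨0, 11, 19⟩, ⟨0, 6, 17⟩, ⟨8, 17, 22⟩, ⟨0, 8, 12⟩, ⟨0, 7, 22⟩, ⟨5, 13, 22⟩, ⟨3, 9, 13⟩,
      ⟨3, 8, 19⟩, ⟨9, 12, 19⟩, ⟨0, 9, 23⟩, ⟨0, 13, 20⟩, ⟨4, 6, 20⟩, ⟨3, 6, 16⟩, ⟨3, 15, 23⟩,
      ⟨9, 15, 18⟩, ⟨4, 16, 18⟩, ⟨7, 16, 21⟩, ⟨3, 7, 18⟩, ⟨5, 17, 18⟩, ⟨5, 16, 19⟩, ⟨1, 17, 19⟩,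
      ⟨1, 6, 18⟩, ⟨10, 12, 18⟩, ⟨4, 12, 22⟩, ⟨2, 9, 22⟩, ⟨2, 16, 20⟩, ⟨5, 10, 20⟩, ⟨5, 8, 15⟩,
      ⟨2, 8, 18⟩, ⟨11, 13, 18⟩, ⟨2, 10, 13⟩, ⟨2, 11, 21⟩, ⟨5, 9, 21⟩, ⟨5, 7, 12⟩, ⟨4, 7, 19⟩,
      ⟨4, 17, 21⟩, ⟨10, 17, 23⟩]
  | 5 =>
    [⟨2, 13, 23⟩, ⟨3, 13, 28⟩, ⟨4, 19, 28⟩, ⟨10, 19, 25⟩, ⟨3, 20, 25⟩, ⟨7, 20, 28⟩, ⟨0, 7, 23⟩,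
      ⟨0, 14, 28⟩, ⟨8, 14, 24⟩, ⟨1, 8, 26⟩, ⟨7, 19, 26⟩, ⟨5, 9, 19⟩, ⟨3, 9, 21⟩, ⟨10, 21, 29⟩,
      ⟨10, 13, 27⟩, ⟨12, 19, 27⟩, ⟨3, 12, 29⟩, ⟨7, 13, 29⟩, ⟨13, 21, 25⟩, ⟨0, 8, 25⟩, ⟨0, 21, 27⟩,
      ⟨15, 22, 27⟩, ⟨11, 15, 23⟩, ⟨11, 13, 26⟩, ⟨4, 13, 18⟩, ⟨3, 11, 18⟩, ⟨1, 11, 29⟩, ⟨1, 13, 19⟩,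
      ⟨14, 19, 29⟩, ⟨3, 10, 14⟩, ⟨10, 17, 18⟩, ⟨11, 17, 28⟩, ⟨11, 14, 21⟩, ⟨9, 14, 25⟩, ⟨2, 7, 25⟩,
      ⟨2, 6, 21⟩, ⟨5, 6, 16⟩, ⟨2, 16, 27⟩, ⟨2, 8, 12⟩, ⟨12, 20, 26⟩, ⟨16, 20, 29⟩, ⟨1, 9, 16⟩,
      ⟨9, 13, 22⟩, ⟨5, 8, 13⟩, ⟨3, 8, 22⟩, ⟨5, 22, 28⟩, ⟨5, 17, 21⟩, ⟨16, 21, 24⟩, ⟨6, 13, 24⟩,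
      ⟨6, 14, 23⟩, ⟨14, 20, 27⟩, ⟨4, 9, 27⟩, ⟨4, 10, 12⟩, ⟨12, 22, 24⟩, ⟨16, 22, 25⟩, ⟨4, 17, 25⟩,
      ⟨3, 17, 23⟩, ⟨8, 23, 27⟩, ⟨3, 6, 27⟩, ⟨6, 17, 26⟩, ⟨10, 23, 26⟩, ⟨10, 16, 28⟩, ⟨12, 23, 28⟩,
      ⟨1, 6, 12⟩, ⟨1, 10, 22⟩, ⟨5, 10, 20⟩, ⟨9, 17, 20⟩, ⟨8, 17, 19⟩, ⟨3, 19, 24⟩, ⟨5, 7, 24⟩,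
      ⟨3, 7, 16⟩, ⟨3, 15, 26⟩, ⟨4, 7, 15⟩, ⟨4, 21, 26⟩, ⟨2, 22, 26⟩, ⟨2, 15, 19⟩, ⟨0, 10, 15⟩,
      ⟨0, 18, 29⟩, ⟨9, 15, 29⟩, ⟨9, 18, 26⟩, ⟨15, 18, 24⟩, ⟨0, 17, 24⟩, ⟨1, 17, 27⟩, ⟨1, 7, 14⟩,
      ⟨4, 14, 22⟩, ⟨7, 17, 22⟩, ⟨7, 12, 21⟩, ⟨8, 21, 28⟩, ⟨2, 9, 28⟩, ⟨2, 17, 29⟩, ⟨6, 22, 29⟩,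
      ⟨6, 15, 28⟩, ⟨8, 15, 20⟩, ⟨4, 6, 20⟩, ⟨4, 11, 24⟩, ⟨9, 23, 24⟩, ⟨0, 9, 12⟩, ⟨0, 11, 22⟩,
      ⟨2, 11, 20⟩, ⟨0, 13, 20⟩, ⟨0, 16, 26⟩, ⟨8, 16, 18⟩, ⟨5, 12, 18⟩, ⟨5, 15, 25⟩, ⟨1, 15, 21⟩,
      ⟨1, 18, 28⟩, ⟨7, 18, 27⟩, ⟨5, 11, 27⟩, ⟨11, 12, 25⟩, ⟨6, 18, 25⟩, ⟨0, 6, 19⟩, ⟨11, 16, 19⟩,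
      ⟨4, 16, 23⟩, ⟨4, 8, 29⟩, ⟨5, 23, 29⟩, ⟨5, 14, 26⟩, ⟨2, 14, 18⟩, ⟨2, 10, 24⟩, ⟨1, 20, 24⟩,
      ⟨1, 23, 25⟩]
  | 6 =>
    [⟨2, 17, 35⟩, ⟨1, 17, 23⟩, ⟨2, 6, 23⟩, ⟨2, 8, 15⟩, ⟨15, 18, 27⟩, ⟨3, 13, 27⟩, ⟨1, 13, 25⟩,
      ⟨1, 8, 29⟩, ⟨5, 8, 20⟩, ⟨10, 20, 29⟩, ⟨10, 12, 18⟩, ⟨12, 22, 32⟩, ⟨1, 28, 32⟩, ⟨1, 10, 27⟩,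
      ⟨5, 10, 16⟩, ⟨5, 7, 30⟩, ⟨1, 9, 30⟩, ⟨9, 25, 31⟩, ⟨4, 11, 31⟩, ⟨11, 12, 28⟩, ⟨2, 7, 12⟩,
      ⟨2, 9, 29⟩, ⟨9, 16, 35⟩, ⟨10, 28, 35⟩, ⟨13, 28, 34⟩, ⟨5, 11, 34⟩, ⟨11, 29, 30⟩, ⟨3, 7, 29⟩,
      ⟨7, 15, 22⟩, ⟨3, 9, 15⟩, ⟨3, 23, 28⟩, ⟨4, 28, 30⟩, ⟨16, 21, 30⟩, ⟨3, 16, 24⟩, ⟨3, 12, 20⟩,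
      ⟨6, 12, 30⟩, ⟨3, 6, 26⟩, ⟨3, 17, 31⟩, ⟨19, 29, 31⟩, ⟨16, 29, 33⟩, ⟨2, 24, 33⟩, ⟨2, 20, 25⟩,
      ⟨10, 25, 34⟩, ⟨17, 22, 34⟩, ⟨17, 20, 26⟩, ⟨15, 20, 35⟩, ⟨15, 26, 32⟩, ⟨2, 19, 26⟩,
      ⟨2, 10, 22⟩, ⟨0, 10, 23⟩, ⟨0, 6, 13⟩, ⟨11, 13, 18⟩, ⟨11, 16, 23⟩, ⟨5, 23, 31⟩, ⟨1, 22, 31⟩,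
      ⟨1, 11, 35⟩, ⟨7, 18, 35⟩, ⟨6, 18, 25⟩, ⟨6, 15, 21⟩, ⟨10, 15, 31⟩, ⟨0, 8, 31⟩, ⟨4, 8, 22⟩,
      ⟨13, 22, 29⟩, ⟨4, 14, 29⟩, ⟨14, 22, 30⟩, ⟨2, 18, 30⟩, ⟨1, 14, 18⟩, ⟨8, 14, 19⟩, ⟨0, 19, 34⟩,
      ⟨0, 25, 33⟩, ⟨3, 22, 33⟩, ⟨3, 21, 35⟩, ⟨6, 29, 35⟩, ⟨12, 29, 34⟩, ⟨9, 12, 26⟩, ⟨11, 21, 26⟩,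
      ⟨11, 17, 25⟩, ⟨17, 18, 32⟩, ⟨0, 16, 32⟩, ⟨0, 17, 30⟩, ⟨10, 26, 30⟩, ⟨10, 13, 24⟩,
      ⟨13, 19, 30⟩, ⟨20, 27, 30⟩, ⟨19, 27, 35⟩, ⟨5, 13, 35⟩, ⟨5, 12, 25⟩, ⟨22, 25, 35⟩, ⟨9, 22, 28⟩,
      ⟨5, 19, 28⟩, ⟨5, 14, 21⟩, ⟨3, 14, 25⟩, ⟨15, 25, 30⟩, ⟨3, 8, 30⟩, ⟨3, 10, 32⟩, ⟨7, 14, 32⟩,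
      ⟨7, 19, 33⟩, ⟨1, 15, 19⟩, ⟨11, 15, 33⟩, ⟨5, 27, 33⟩, ⟨5, 9, 32⟩, ⟨9, 13, 23⟩, ⟨23, 25, 32⟩,
      ⟨11, 20, 32⟩, ⟨11, 22, 24⟩, ⟨0, 20, 24⟩, ⟨9, 14, 20⟩, ⟨14, 23, 27⟩, ⟨7, 23, 34⟩, ⟨3, 18, 34⟩,
      ⟨18, 28, 31⟩, ⟨0, 15, 28⟩, ⟨0, 12, 35⟩, ⟨12, 21, 27⟩, ⟨4, 27, 32⟩, ⟨4, 15, 34⟩, ⟨8, 27, 34⟩,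
      ⟨8, 24, 32⟩, ⟨6, 19, 32⟩, ⟨5, 6, 22⟩, ⟨16, 22, 27⟩, ⟨16, 26, 31⟩, ⟨5, 18, 26⟩, ⟨5, 15, 24⟩,
      ⟨15, 23, 29⟩, ⟨0, 18, 29⟩, ⟨9, 18, 33⟩, ⟨23, 26, 33⟩, ⟨0, 22, 26⟩, ⟨0, 11, 14⟩, ⟨2, 14, 31⟩,
      ⟨7, 27, 31⟩, ⟨0, 9, 27⟩, ⟨0, 7, 21⟩, ⟨1, 21, 24⟩, ⟨9, 19, 24⟩, ⟨4, 9, 17⟩, ⟨4, 12, 19⟩,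
      ⟨12, 24, 31⟩, ⟨13, 21, 31⟩, ⟨8, 13, 33⟩, ⟨20, 28, 33⟩, ⟨7, 16, 28⟩, ⟨16, 19, 25⟩, ⟨8, 21, 25⟩,
      ⟨4, 10, 21⟩, ⟨10, 14, 33⟩, ⟨17, 21, 33⟩, ⟨9, 21, 34⟩, ⟨2, 16, 34⟩, ⟨2, 21, 28⟩, ⟨6, 14, 28⟩,
      ⟨1, 6, 16⟩, ⟨1, 12, 33⟩, ⟨8, 12, 23⟩, ⟨23, 24, 30⟩, ⟨7, 17, 24⟩, ⟨1, 7, 26⟩, ⟨1, 20, 34⟩,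
      ⟨6, 20, 31⟩, ⟨6, 17, 27⟩, ⟨8, 17, 28⟩, ⟨8, 26, 35⟩, ⟨4, 23, 35⟩, ⟨4, 7, 25⟩, ⟨7, 13, 20⟩,
      ⟨4, 16, 20⟩, ⟨8, 16, 18⟩, ⟨4, 18, 24⟩, ⟨14, 24, 35⟩, ⟨14, 26, 34⟩, ⟨6, 24, 34⟩, ⟨4, 6, 33⟩,
      ⟨4, 13, 26⟩, ⟨2, 13, 32⟩, ⟨21, 29, 32⟩, ⟨5, 17, 29⟩, ⟨10, 17, 19⟩, ⟨3, 11, 19⟩, ⟨2, 11, 27⟩]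
  | 8 =>
    [⟨5, 32, 38⟩, ⟨27, 32, 41⟩, ⟨17, 31, 41⟩, ⟨0, 25, 31⟩, ⟨0, 16, 24⟩, ⟨3, 16, 30⟩, ⟨0, 30, 47⟩,
      ⟨1, 22, 47⟩, ⟨2, 22, 28⟩, ⟨0, 28, 38⟩, ⟨0, 23, 46⟩, ⟨16, 37, 46⟩, ⟨14, 33, 37⟩, ⟨0, 26, 33⟩,
      ⟨0, 20, 37⟩, ⟨22, 37, 42⟩, ⟨17, 40, 42⟩, ⟨6, 21, 40⟩, ⟨21, 24, 33⟩, ⟨16, 33, 36⟩,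
      ⟨26, 36, 44⟩, ⟨21, 26, 39⟩, ⟨12, 34, 39⟩, ⟨25, 34, 41⟩, ⟨15, 41, 42⟩, ⟨0, 13, 42⟩,
      ⟨0, 18, 35⟩, ⟨4, 7, 18⟩, ⟨0, 7, 17⟩, ⟨17, 20, 26⟩, ⟨9, 26, 40⟩, ⟨25, 40, 46⟩, ⟨35, 36, 46⟩,
      ⟨20, 35, 39⟩, ⟨9, 20, 31⟩, ⟨10, 13, 31⟩, ⟨9, 13, 46⟩, ⟨9, 37, 47⟩, ⟨5, 17, 47⟩, ⟨17, 21, 25⟩,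
      ⟨2, 21, 44⟩, ⟨2, 39, 46⟩, ⟨10, 28, 46⟩, ⟨0, 10, 12⟩, ⟨0, 14, 39⟩, ⟨5, 11, 14⟩, ⟨11, 32, 46⟩,
      ⟨12, 26, 32⟩, ⟨11, 26, 35⟩, ⟨2, 13, 35⟩, ⟨2, 9, 14⟩, ⟨9, 16, 23⟩, ⟨4, 16, 47⟩, ⟨4, 27, 46⟩,
      ⟨14, 24, 46⟩, ⟨6, 24, 43⟩, ⟨16, 22, 43⟩, ⟨8, 16, 28⟩, ⟨8, 25, 32⟩, ⟨3, 29, 32⟩, ⟨2, 19, 29⟩,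
      ⟨2, 40, 43⟩, ⟨9, 21, 43⟩, ⟨9, 25, 38⟩, ⟨7, 16, 38⟩, ⟨7, 29, 37⟩, ⟨5, 24, 37⟩, ⟨5, 10, 26⟩,
      ⟨2, 26, 45⟩, ⟨21, 28, 45⟩, ⟨28, 32, 40⟩, ⟨15, 30, 40⟩, ⟨28, 30, 42⟩, ⟨28, 35, 43⟩,
      ⟨3, 14, 43⟩, ⟨3, 20, 46⟩, ⟨7, 34, 46⟩, ⟨7, 32, 42⟩, ⟨10, 34, 42⟩, ⟨2, 10, 32⟩, ⟨23, 32, 44⟩,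
      ⟨5, 34, 44⟩, ⟨3, 9, 34⟩, ⟨3, 31, 36⟩, ⟨4, 31, 39⟩, ⟨9, 39, 42⟩, ⟨9, 22, 24⟩, ⟨3, 19, 24⟩,
      ⟨19, 30, 36⟩, ⟨15, 18, 36⟩, ⟨7, 15, 44⟩, ⟨20, 38, 44⟩, ⟨10, 19, 38⟩, ⟨10, 30, 44⟩,
      ⟨16, 31, 44⟩, ⟨11, 16, 39⟩, ⟨3, 10, 39⟩, ⟨3, 12, 41⟩, ⟨12, 19, 40⟩, ⟨1, 40, 44⟩, ⟨19, 28, 44⟩,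
      ⟨1, 19, 37⟩, ⟨18, 25, 37⟩, ⟨7, 25, 45⟩, ⟨7, 36, 43⟩, ⟨10, 37, 43⟩, ⟨4, 37, 45⟩, ⟨4, 11, 44⟩,
      ⟨3, 22, 44⟩, ⟨3, 21, 42⟩, ⟨12, 21, 38⟩, ⟨13, 38, 43⟩, ⟨11, 13, 33⟩, ⟨1, 12, 33⟩, ⟨11, 12, 37⟩,
      ⟨11, 25, 42⟩, ⟨4, 14, 25⟩, ⟨7, 14, 41⟩, ⟨7, 21, 35⟩, ⟨1, 35, 41⟩, ⟨1, 15, 28⟩, ⟨17, 28, 33⟩,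
      ⟨25, 33, 44⟩, ⟨19, 25, 43⟩, ⟨27, 34, 43⟩, ⟨16, 18, 34⟩, ⟨18, 26, 38⟩, ⟨4, 30, 38⟩,
      ⟨11, 22, 30⟩, ⟨3, 11, 17⟩, ⟨10, 17, 22⟩, ⟨6, 22, 41⟩, ⟨6, 16, 42⟩, ⟨23, 31, 42⟩, ⟨23, 29, 30⟩,
      ⟨13, 30, 39⟩, ⟨13, 20, 25⟩, ⟨5, 8, 20⟩, ⟨5, 23, 28⟩, ⟨23, 35, 38⟩, ⟨2, 24, 38⟩, ⟨2, 27, 47⟩,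
      ⟨18, 27, 42⟩, ⟨24, 36, 42⟩, ⟨8, 12, 36⟩, ⟨12, 35, 47⟩, ⟨25, 39, 47⟩, ⟨2, 16, 25⟩, ⟨2, 12, 42⟩,
      ⟨12, 24, 30⟩, ⟨13, 24, 34⟩, ⟨13, 18, 47⟩, ⟨11, 21, 47⟩, ⟨0, 21, 36⟩, ⟨0, 11, 19⟩,
      ⟨15, 19, 39⟩, ⟨6, 28, 39⟩, ⟨13, 28, 41⟩, ⟨8, 41, 47⟩, ⟨6, 31, 47⟩, ⟨21, 31, 46⟩, ⟨8, 29, 46⟩,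
      ⟨3, 8, 15⟩, ⟨3, 23, 25⟩, ⟨1, 10, 25⟩, ⟨1, 34, 38⟩, ⟨14, 22, 38⟩, ⟨22, 27, 39⟩, ⟨27, 31, 45⟩,
      ⟨5, 31, 40⟩, ⟨5, 12, 22⟩, ⟨22, 25, 36⟩, ⟨6, 12, 25⟩, ⟨6, 26, 46⟩, ⟨8, 26, 43⟩, ⟨8, 14, 21⟩,
      ⟨5, 21, 27⟩, ⟨5, 33, 42⟩, ⟨3, 27, 33⟩, ⟨3, 6, 18⟩, ⟨4, 6, 19⟩, ⟨19, 41, 46⟩, ⟨12, 18, 46⟩,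
      ⟨18, 24, 32⟩, ⟨17, 23, 24⟩, ⟨17, 18, 44⟩, ⟨18, 29, 40⟩, ⟨17, 29, 45⟩, ⟨1, 11, 45⟩,
      ⟨1, 29, 42⟩, ⟨9, 12, 29⟩, ⟨4, 9, 17⟩, ⟨17, 27, 36⟩, ⟨12, 27, 44⟩, ⟨4, 12, 28⟩, ⟨4, 20, 42⟩,
      ⟨19, 26, 42⟩, ⟨17, 19, 34⟩, ⟨20, 28, 34⟩, ⟨10, 20, 45⟩, ⟨10, 14, 40⟩, ⟨6, 14, 44⟩, ⟨2, 6, 23⟩,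
      ⟨2, 11, 34⟩, ⟨11, 27, 38⟩, ⟨7, 13, 27⟩, ⟨2, 7, 30⟩, ⟨2, 33, 41⟩, ⟨5, 41, 43⟩, ⟨5, 6, 36⟩,
      ⟨2, 20, 36⟩, ⟨14, 20, 30⟩, ⟨5, 25, 30⟩, ⟨5, 16, 29⟩, ⟨16, 20, 32⟩, ⟨20, 33, 43⟩, ⟨9, 19, 33⟩,
      ⟨9, 18, 28⟩, ⟨3, 28, 37⟩, ⟨3, 38, 47⟩, ⟨15, 20, 47⟩, ⟨15, 27, 37⟩, ⟨8, 35, 37⟩, ⟨14, 35, 42⟩,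
      ⟨14, 28, 31⟩, ⟨26, 31, 37⟩, ⟨4, 15, 26⟩, ⟨0, 15, 43⟩, ⟨0, 29, 41⟩, ⟨16, 21, 41⟩, ⟨10, 16, 27⟩,
      ⟨10, 15, 21⟩, ⟨15, 25, 35⟩, ⟨24, 35, 44⟩, ⟨20, 24, 41⟩, ⟨18, 41, 45⟩, ⟨18, 30, 43⟩,
      ⟨21, 30, 37⟩, ⟨2, 17, 37⟩, ⟨2, 15, 31⟩, ⟨29, 31, 38⟩, ⟨8, 38, 42⟩, ⟨4, 8, 24⟩, ⟨4, 10, 41⟩,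
      ⟨11, 23, 41⟩, ⟨11, 28, 36⟩, ⟨4, 13, 36⟩, ⟨13, 22, 26⟩, ⟨4, 22, 35⟩, ⟨4, 23, 40⟩, ⟨11, 20, 40⟩,
      ⟨6, 20, 29⟩, ⟨14, 29, 36⟩, ⟨32, 36, 47⟩, ⟨7, 28, 47⟩, ⟨3, 7, 26⟩, ⟨14, 26, 34⟩, ⟨14, 23, 27⟩,
      ⟨1, 20, 27⟩, ⟨1, 30, 46⟩, ⟨6, 27, 30⟩, ⟨0, 9, 27⟩, ⟨0, 34, 40⟩, ⟨16, 35, 40⟩, ⟨1, 16, 26⟩,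
      ⟨1, 6, 13⟩, ⟨13, 19, 32⟩, ⟨4, 32, 43⟩, ⟨1, 17, 43⟩, ⟨17, 32, 39⟩, ⟨1, 21, 32⟩, ⟨1, 24, 31⟩,
      ⟨24, 39, 45⟩, ⟨12, 23, 45⟩, ⟨7, 12, 20⟩, ⟨7, 24, 40⟩, ⟨10, 24, 47⟩, ⟨10, 23, 36⟩,
      ⟨34, 36, 45⟩, ⟨0, 6, 45⟩, ⟨6, 15, 34⟩, ⟨29, 34, 47⟩, ⟨33, 40, 47⟩, ⟨6, 33, 38⟩, ⟨17, 38, 46⟩,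
      ⟨22, 33, 46⟩, ⟨15, 22, 29⟩, ⟨29, 39, 44⟩, ⟨13, 37, 44⟩, ⟨5, 13, 45⟩, ⟨5, 18, 39⟩,
      ⟨11, 18, 31⟩, ⟨12, 31, 43⟩, ⟨23, 39, 43⟩, ⟨7, 33, 39⟩, ⟨8, 33, 45⟩, ⟨0, 8, 44⟩, ⟨0, 22, 32⟩,
      ⟨9, 15, 32⟩, ⟨11, 15, 24⟩, ⟨11, 29, 43⟩, ⟨13, 21, 29⟩, ⟨8, 13, 23⟩, ⟨23, 26, 47⟩,
      ⟨14, 19, 47⟩, ⟨1, 14, 18⟩, ⟨1, 9, 36⟩, ⟨9, 30, 45⟩, ⟨26, 30, 41⟩, ⟨9, 41, 44⟩, ⟨5, 9, 35⟩,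
      ⟨5, 7, 19⟩, ⟨1, 7, 23⟩, ⟨1, 8, 39⟩, ⟨8, 17, 30⟩, ⟨6, 17, 35⟩, ⟨10, 29, 35⟩, ⟨10, 18, 33⟩,
      ⟨2, 8, 18⟩, ⟨8, 19, 31⟩, ⟨7, 22, 31⟩, ⟨22, 40, 45⟩, ⟨3, 13, 40⟩, ⟨3, 35, 45⟩, ⟨14, 32, 45⟩,
      ⟨6, 32, 37⟩, ⟨23, 34, 37⟩, ⟨15, 23, 33⟩, ⟨4, 29, 33⟩, ⟨4, 21, 34⟩, ⟨8, 22, 34⟩, ⟨8, 27, 40⟩,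
      ⟨19, 27, 35⟩, ⟨16, 19, 45⟩, ⟨15, 38, 45⟩, ⟨5, 15, 46⟩]
  | _ => []

end CAHCertificate

/-- For every `t ∈ {3, 4, 5, 6, 8}` there exists a c.a.h. `{3}`-GDD of type `6ᵗ`. -/
theorem exists_cah_threeGDD_type_six_pow_small
    (t : ℕ) (ht : t ∈ ({3, 4, 5, 6, 8} : Finset ℕ)) :
    CAHThreeGDD (Multiset.replicate t 6) := by
  have hcert : CAHCertificate.IsCertificate 6 t (CAHCertificate.sixPowCycle t) := by
    fin_cases ht <;> decide +kernel
  exact CAHCertificate.cahThreeGDD_of_isCertificate (by norm_num) hcert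
end

section
/- The minimum length of a 2-radius sequence satisfies f_2(8) = 17, f_2(10) = 30, f_2(11) = 33, f_2(14) = 56, and f_2(15) = 60. In each of these cases f_2(n) equals the lower bound L(n), where L(n) = (1/2)·C(n,2) + n/4 + 1 if n ≡ 0 (mod 4), L(n) = (1/2)·C(n,2) + 2 if n ≡ 1 (mod 4), L(n) = (1/2)·C(n,2) + 3n/4 if n ≡ 2 (mod 4), and L(n) = (1/2)·C(n,2) + n/2 if n ≡ 3 (mod 4), with C(n,2) = n(n−1)/2. -/
/-- A `k`-radius sequence of order `n`: a sequence with entries in `{1,…,n}` such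
that every pair of distinct elements of `{1,…,n}` occurs within distance `k`. -/
def IsKRadiusSeq (k n : ℕ) {m : ℕ} (a : Fin m → ℕ) : Prop :=
  (∀ i, a i ∈ Finset.Icc 1 n) ∧
    ∀ x ∈ Finset.Icc 1 n, ∀ y ∈ Finset.Icc 1 n, x ≠ y →
      ∃ i j : Fin m, a i = x ∧ a j = y ∧ ((i : ℤ) - (j : ℤ)).natAbs ≤ k

/-- `f_k(n)`: the minimum length of a `k`-radius sequence of order `n`. -/
noncomputable def radiusSeqMin (k n : ℕ) : ℕ :=
  sInf {m | ∃ a : Fin m → ℕ, IsKRadiusSeq k n a}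

/-- The Jaromczyk–Lonc lower bound `L(n)` for `f₂(n)`, where
`(1/2)·C(n,2) = n(n−1)/4`. -/
noncomputable def JLBound (n : ℕ) : ℚ :=
  if n % 4 = 0 then (n : ℚ) * ((n : ℚ) - 1) / 4 + (n : ℚ) / 4 + 1
  else if n % 4 = 1 then (n : ℚ) * ((n : ℚ) - 1) / 4 + 2
  else if n % 4 = 2 then (n : ℚ) * ((n : ℚ) - 1) / 4 + 3 * (n : ℚ) / 4
  else (n : ℚ) * ((n : ℚ) - 1) / 4 + (n : ℚ) / 2

/-!
Counting gives the lower bound. In a `k`-radius sequence every value `x` must sit within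
distance `k` of each of the other `n - 1` values, while each occurrence of `x` has at most
`2k` positions within distance `k`; so `x` occurs at least `⌈(n-1)/2k⌉` times. The value at
the first position is better still: that occurrence has only `k` neighbours, so it occurs at least
`⌈(n-1+k)/2k⌉` times. Summing over the values, `f_k(n) ≥ (n-1)⌈(n-1)/2k⌉ + ⌈(n-1+k)/2k⌉`,
and for `k = 2` and `n = 8, 10, 11, 14, 15` explicit sequences of exactly that length exist.
-/

open Finset

section LowerBound

variable {k n m : ℕ} {a : Fin m → ℕ}

def nearPositions (k : ℕ) (i : Fin m) : Finset (Fin m) :=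
  {j | j ≠ i ∧ ((i : ℤ) - (j : ℤ)).natAbs ≤ k}

lemma card_nearPositions_le (i : Fin m) : #(nearPositions k i) ≤ 2 * k := by
  have hmaps : Set.MapsTo (fun j : Fin m => (j : ℕ)) (nearPositions k i)
      ((Icc ((i : ℕ) - k) (i + k)).erase i) := by
    intro j hj
    simp only [nearPositions, coe_filter, mem_univ, true_and, Set.mem_ofPred_eq,
      ← Fin.val_ne_iff] at hj
    simp only [coe_erase, coe_Icc, Set.mem_sdiff, Set.mem_Icc, Set.mem_singleton_iff]
    omega
  have := card_le_card_of_injOn _ hmaps Fin.val_injective.injOn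
  rw [card_erase_of_mem (by simp), Nat.card_Icc] at this
  omega

lemma card_nearPositions_first_le (hm : 0 < m) : #(nearPositions k ⟨0, hm⟩) ≤ k := by
  have hmaps : Set.MapsTo (fun j : Fin m => (j : ℕ)) (nearPositions k ⟨0, hm⟩) (Icc 1 k) := by
    intro j hj
    simp only [nearPositions, coe_filter, mem_univ, true_and, Set.mem_ofPred_eq,
      ← Fin.val_ne_iff] at hj
    simp only [coe_Icc, Set.mem_Icc]
    omega
  simpa using card_le_card_of_injOn _ hmaps Fin.val_injective.injOn

def occurrences (a : Fin m → ℕ) (x : ℕ) : Finset (Fin m) := {i | a i = x}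

def radiusLowerBound (k n : ℕ) : ℕ :=
  (n - 1) * ((n - 1) ⌈/⌉ (2 * k)) + (n - 1 + k) ⌈/⌉ (2 * k)

namespace IsKRadiusSeq

lemma sub_one_le_sum_card_nearPositions (h : IsKRadiusSeq k n a) {x : ℕ} (hx : x ∈ Icc 1 n) :
    n - 1 ≤ ∑ i ∈ occurrences a x, #(nearPositions k i) := by
  have hsub : (Icc 1 n).erase x ⊆ ((occurrences a x).biUnion (nearPositions k)).image a := by
    intro y hy
    obtain ⟨hyx, hy⟩ := mem_erase.1 hy
    obtain ⟨i, j, rfl, rfl, hij⟩ := h.2 _ hx y hy hyx.symm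
    refine mem_image_of_mem a (mem_biUnion.2 ⟨i, by simp [occurrences], ?_⟩)
    simp only [nearPositions, mem_filter, mem_univ, true_and]
    exact ⟨fun hji => hyx (congrArg a hji), hij⟩
  calc n - 1 = #((Icc 1 n).erase x) := by simp [card_erase_of_mem hx]
    _ ≤ #((occurrences a x).biUnion (nearPositions k)) := (card_le_card hsub).trans card_image_le
    _ ≤ _ := card_biUnion_le

lemma ceilDiv_le_card_occurrences (h : IsKRadiusSeq k n a) {x : ℕ} (hx : x ∈ Icc 1 n) :
    (n - 1) ⌈/⌉ (2 * k) ≤ #(occurrences a x) := by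
  rcases Nat.eq_zero_or_pos k with rfl | hk
  · simp
  rw [ceilDiv_le_iff_le_mul (by omega), mul_comm]
  exact (h.sub_one_le_sum_card_nearPositions hx).trans
    (sum_le_card_nsmul _ _ _ fun i _ => card_nearPositions_le i)

lemma ceilDiv_le_card_occurrences_first (h : IsKRadiusSeq k n a) (hm : 0 < m) :
    (n - 1 + k) ⌈/⌉ (2 * k) ≤ #(occurrences a (a ⟨0, hm⟩)) := by
  rcases Nat.eq_zero_or_pos k with rfl | hk
  · simp
  set i₀ : Fin m := ⟨0, hm⟩
  set c := #(occurrences a (a i₀))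
  have hi₀ : i₀ ∈ occurrences a (a i₀) := by simp [occurrences]
  have hc : 2 * k ≤ c * (2 * k) := Nat.le_mul_of_pos_left _ (card_pos.2 ⟨i₀, hi₀⟩)
  have hrest :
      ∑ i ∈ (occurrences a (a i₀)).erase i₀, #(nearPositions k i) ≤ c * (2 * k) - 2 * k := by
    have := sum_le_card_nsmul ((occurrences a (a i₀)).erase i₀) _ _
      fun i _ => card_nearPositions_le (k := k) i
    rwa [card_erase_of_mem hi₀, smul_eq_mul, Nat.sub_one_mul] at this
  have hfirst : #(nearPositions k i₀) ≤ k := card_nearPositions_first_le hm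
  have hslots := h.sub_one_le_sum_card_nearPositions (h.1 i₀)
  rw [← add_sum_erase _ _ hi₀] at hslots
  rw [ceilDiv_le_iff_le_mul (by omega), mul_comm]
  omega

lemma sum_card_occurrences (h : IsKRadiusSeq k n a) :
    ∑ x ∈ Icc 1 n, #(occurrences a x) = m := by
  simpa [occurrences] using (card_eq_sum_card_fiberwise (s := univ) fun i _ => h.1 i).symm

lemma length_pos (h : IsKRadiusSeq k n a) (hn : 2 ≤ n) : 0 < m := by
  obtain ⟨i, -⟩ := h.2 1 (by simp; omega) 2 (by simp; omega) (by omega)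
  exact i.pos

theorem radiusLowerBound_le_length (h : IsKRadiusSeq k n a) (hn : 2 ≤ n) :
    radiusLowerBound k n ≤ m := by
  have hm := h.length_pos hn
  have hx₀ := h.1 ⟨0, hm⟩
  have hrest : (n - 1) * ((n - 1) ⌈/⌉ (2 * k)) ≤
      ∑ x ∈ (Icc 1 n).erase (a ⟨0, hm⟩), #(occurrences a x) := by
    have := card_nsmul_le_sum ((Icc 1 n).erase (a ⟨0, hm⟩)) _ _
      fun x hx => h.ceilDiv_le_card_occurrences (mem_of_mem_erase hx)
    simpa [card_erase_of_mem hx₀] using this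
  rw [← h.sum_card_occurrences, ← add_sum_erase _ _ hx₀]
  have := h.ceilDiv_le_card_occurrences_first hm
  unfold radiusLowerBound
  omega

end IsKRadiusSeq

end LowerBound

section Construction

def OccurNear (k : ℕ) (l : List ℕ) (x y : ℕ) : Prop :=
  ∃ i < l.length, ∃ d ≤ k,
    l[i]? = some x ∧ l[i + d]? = some y ∨ l[i]? = some y ∧ l[i + d]? = some x

instance (k : ℕ) (l : List ℕ) (x y : ℕ) : Decidable (OccurNear k l x y) := by
  unfold OccurNear; infer_instance

variable {k n : ℕ} {l : List ℕ}

lemma OccurNear.exists_fin {x y : ℕ} (h : OccurNear k l x y) :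
    ∃ i j : Fin l.length, l.get i = x ∧ l.get j = y ∧ ((i : ℤ) - (j : ℤ)).natAbs ≤ k := by
  obtain ⟨i, -, d, hd, ⟨hi, hj⟩ | ⟨hi, hj⟩⟩ := h <;>
    obtain ⟨hi', rfl⟩ := List.getElem?_eq_some_iff.1 hi <;>
    obtain ⟨hj', rfl⟩ := List.getElem?_eq_some_iff.1 hj
  · exact ⟨⟨i, hi'⟩, ⟨i + d, hj'⟩, rfl, rfl, by simp; omega⟩
  · exact ⟨⟨i + d, hj'⟩, ⟨i, hi'⟩, rfl, rfl, by simp; omega⟩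

lemma OccurNear.symm {x y : ℕ} (h : OccurNear k l x y) : OccurNear k l y x := by
  obtain ⟨i, hi, d, hd, h⟩ := h
  exact ⟨i, hi, d, hd, h.symm⟩

lemma isKRadiusSeq_get (hl : ∀ v ∈ l, v ∈ Icc 1 n)
    (hnear : ∀ x ∈ Icc 1 n, ∀ y ∈ Icc 1 n, x < y → OccurNear k l x y) :
    IsKRadiusSeq k n l.get := by
  refine ⟨fun i => hl _ (List.get_mem l i), fun x hx y hy hxy => ?_⟩
  rcases hxy.lt_or_gt with hlt | hlt
  · exact (hnear x hx y hy hlt).exists_fin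
  · exact (hnear y hy x hx hlt).symm.exists_fin

lemma radiusSeqMin_le_length (h : IsKRadiusSeq k n l.get) :
    radiusSeqMin k n ≤ l.length :=
  Nat.sInf_le ⟨l.get, h⟩

theorem radiusSeqMin_eq_length (hn : 2 ≤ n) (h : IsKRadiusSeq k n l.get)
    (hl : l.length ≤ radiusLowerBound k n) :
    radiusSeqMin k n = l.length :=
  (radiusSeqMin_le_length h).antisymm <|
    le_csInf ⟨_, l.get, h⟩ fun _ ⟨_, ha⟩ => hl.trans (ha.radiusLowerBound_le_length hn)

end Construction

def twoRadiusList8 : List ℕ :=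
  [7, 6, 5, 2, 8, 1, 7, 2, 4, 3, 5, 1, 4, 6, 8, 3, 7]
def twoRadiusList10 : List ℕ :=
  [5, 7, 2, 8, 6, 1, 10, 2, 6, 1, 3, 5, 4, 7, 9, 1, 2, 4, 3, 8, 10, 8, 5, 9, 6, 4, 7, 10, 3, 9]
def twoRadiusList11 : List ℕ :=
  [2, 1, 7, 8, 6, 11, 2, 9, 5, 6, 7, 10, 11, 4, 8, 2, 3, 10, 1, 5, 11, 3, 6, 4, 1, 10, 9, 8, 4, 5,
    7, 3, 9]
def twoRadiusList14 : List ℕ :=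
  [7, 3, 9, 5, 14, 11, 4, 2, 1, 5, 1, 6, 8, 7, 10, 2, 3, 14, 1, 13, 7, 4, 6, 3, 11, 13, 9, 10, 8,
    12, 5, 7, 14, 11, 10, 1, 9, 12, 11, 8, 4, 14, 12, 6, 3, 13, 8, 2, 6, 9, 10, 4, 5, 2, 13, 12]
def twoRadiusList15 : List ℕ :=
  [1, 7, 8, 6, 14, 11, 7, 3, 5, 8, 13, 4, 12, 9, 14, 3, 13, 1, 2, 10, 11, 5, 1, 15, 14, 4, 11, 12,
    9, 1, 6, 4, 3, 10, 12, 7, 15, 11, 13, 8, 6, 10, 15, 9, 8, 2, 12, 6, 5, 2, 4, 7, 13, 9, 10, 5,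
    14, 2, 3, 15]

lemma radiusSeqMin_two_8 : radiusSeqMin 2 8 = 17 :=
  radiusSeqMin_eq_length (l := twoRadiusList8) (by norm_num)
    (isKRadiusSeq_get (by decide +kernel) (by decide +kernel)) (by decide)

lemma radiusSeqMin_two_10 : radiusSeqMin 2 10 = 30 :=
  radiusSeqMin_eq_length (l := twoRadiusList10) (by norm_num)
    (isKRadiusSeq_get (by decide +kernel) (by decide +kernel)) (by decide)

lemma radiusSeqMin_two_11 : radiusSeqMin 2 11 = 33 :=
  radiusSeqMin_eq_length (l := twoRadiusList11) (by norm_num)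
    (isKRadiusSeq_get (by decide +kernel) (by decide +kernel)) (by decide)

lemma radiusSeqMin_two_14 : radiusSeqMin 2 14 = 56 :=
  radiusSeqMin_eq_length (l := twoRadiusList14) (by norm_num)
    (isKRadiusSeq_get (by decide +kernel) (by decide +kernel)) (by decide)

lemma radiusSeqMin_two_15 : radiusSeqMin 2 15 = 60 :=
  radiusSeqMin_eq_length (l := twoRadiusList15) (by norm_num)
    (isKRadiusSeq_get (by decide +kernel) (by decide +kernel)) (by decide)

/-- `f₂(8) = 17`, `f₂(10) = 30`, `f₂(11) = 33`, `f₂(14) = 56`, `f₂(15) = 60`, and in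
each of these cases `f₂(n)` equals the Jaromczyk–Lonc lower bound `L(n)`. -/
theorem radiusSeqMin_two_values :
    radiusSeqMin 2 8 = 17 ∧ (radiusSeqMin 2 8 : ℚ) = JLBound 8 ∧
    radiusSeqMin 2 10 = 30 ∧ (radiusSeqMin 2 10 : ℚ) = JLBound 10 ∧
    radiusSeqMin 2 11 = 33 ∧ (radiusSeqMin 2 11 : ℚ) = JLBound 11 ∧
    radiusSeqMin 2 14 = 56 ∧ (radiusSeqMin 2 14 : ℚ) = JLBound 14 ∧
    radiusSeqMin 2 15 = 60 ∧ (radiusSeqMin 2 15 : ℚ) = JLBound 15 := by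
  refine ⟨radiusSeqMin_two_8, ?_, radiusSeqMin_two_10, ?_, radiusSeqMin_two_11, ?_,
    radiusSeqMin_two_14, ?_, radiusSeqMin_two_15, ?_⟩ <;>
  norm_num [JLBound, radiusSeqMin_two_8, radiusSeqMin_two_10, radiusSeqMin_two_11,
    radiusSeqMin_two_14, radiusSeqMin_two_15]
end

section
/- (Fort–Hedlund) For every integer n ≥ 3, the covering number for pairs by triples satisfies C(n,3,2) = ⌈(n/3)·⌈(n−1)/2⌉⌉. -/
/-!
Every point lies in at least `⌈(n - 1) / 2⌉ = ⌊n / 2⌋` blocks, so counting incidences gives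
`3 |A| ≥ n ⌊n / 2⌋`.

For the matching constructions write `n = 3 m + r` and take the points `ℤ/m × ℤ/3` plus `r`
new points. For maps `f k` onto `ℤ/m`, Bose's blocks `{(i, k), (j, k), (f k (i + j), k + 1)}`,
`i ≠ j`, cover every pair except the `3 m` leftover pairs `(a, k), (f k (2 a), k + 1)`, and each
residue of `n` mod 6 covers these cheaply:
* `m` odd, `f k` halving: the leftover pairs are vertical and `m` columns cover them (`n = 6t+3`);
* `m = 2 h`, `f k (2 a) = a mod h`: the leftover pairs come in twos
  `(s, k), (s + h, k) → (s, k + 1)` and `3 h` blocks cover them (`n = 6h`); with one new point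
  `∞`, the columns of `s < h` and the blocks `{∞, (s + h, k), (s, k + 1)}` cover them together
  with all pairs through `∞` (`n = 6h+1`);
* `m` odd, `f k` halving shifted by `1` at level `0`: the leftover pairs form one closed walk of
  odd length `3 m`, covered by two windmills around two new points (`n = 6t+5`);
* `n = 6t+4` and `n = 6h+2` come from `6t+3` and `6h+1` by a new point joined to a
  near-perfect matching.
-/

open Finset

def coveringBound (n : ℕ) : ℕ := n * (n / 2) ⌈/⌉ 3

theorem ceil_natCast_div_natCast_eq_ceilDiv (k d : ℕ) :
    ⌈(k : ℚ) / d⌉ = ((k ⌈/⌉ d : ℕ) : ℤ) := by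
  rcases Nat.eq_zero_or_pos d with rfl | hd
  · simp
  have hle : k ≤ d * (k ⌈/⌉ d) := le_smul_ceilDiv hd
  have hlt : d * (k ⌈/⌉ d) < k + d := by
    rw [Nat.ceilDiv_eq_add_pred_div, mul_comm]
    exact (Nat.div_mul_le_self _ _).trans_lt (by omega)
  have hd' : (0 : ℚ) < d := by exact_mod_cast hd
  rw [Int.ceil_eq_iff, Int.cast_natCast, lt_div_iff₀ hd', div_le_iff₀ hd']
  constructor
  · have : ((d * (k ⌈/⌉ d) : ℕ) : ℚ) < k + d := by exact_mod_cast hlt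
    push_cast at this
    linarith
  · have : (k : ℚ) ≤ ((d * (k ⌈/⌉ d) : ℕ) : ℚ) := by exact_mod_cast hle
    push_cast at this
    linarith

theorem le_coveringBound_of_three_mul_le {n m : ℕ} (h : 3 * m ≤ n * (n / 2) + 2) :
    m ≤ coveringBound n := by
  rw [coveringBound, Nat.ceilDiv_eq_add_pred_div, Nat.le_div_iff_mul_le three_pos]
  omega

theorem Nat.choose_two_two_mul_add_one (t : ℕ) : (2 * t + 1).choose 2 = t * (2 * t + 1) := by
  rw [Nat.choose_two_right, Nat.add_sub_cancel]
  exact Nat.div_eq_of_eq_mul_left two_pos (by ring)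

theorem Nat.choose_two_two_mul_add_self (h : ℕ) : (2 * h).choose 2 + h = 2 * h * h := by
  rcases h with _ | h
  · rfl
  rw [Nat.choose_two_right, show 2 * (h + 1) - 1 = 2 * h + 1 by omega,
    Nat.div_eq_of_eq_mul_left two_pos
      (show 2 * (h + 1) * (2 * h + 1) = (h + 1) * (2 * h + 1) * 2 by ring)]
  ring

namespace IsCovering

variable {n : ℕ} {X : Finset ℕ} {A : Finset (Finset ℕ)}

theorem sub_one_le_two_mul_card_filter_mem (h : IsCovering n X A) {x : ℕ} (hx : x ∈ X) :
    n - 1 ≤ 2 * #{B ∈ A | x ∈ B} := by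
  obtain ⟨hX, hA, hcov⟩ := h
  have hsub : X.erase x ⊆ {B ∈ A | x ∈ B}.biUnion (·.erase x) := by
    intro y hy
    obtain ⟨hyx, hyX⟩ := mem_erase.1 hy
    obtain ⟨B, hB, hxB, hyB⟩ := hcov x hx y hyX hyx.symm
    exact mem_biUnion.2 ⟨B, mem_filter.2 ⟨hB, hxB⟩, mem_erase.2 ⟨hyx, hyB⟩⟩
  calc n - 1 = #(X.erase x) := by rw [card_erase_of_mem hx, hX]
    _ ≤ ∑ B ∈ {B ∈ A | x ∈ B}, #(B.erase x) := (card_le_card hsub).trans card_biUnion_le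
    _ = 2 * #{B ∈ A | x ∈ B} := by
      rw [sum_const_nat fun B hB => ?_, mul_comm]
      obtain ⟨hB, hxB⟩ := mem_filter.1 hB
      rw [card_erase_of_mem hxB, (hA B hB).2]

theorem sum_card_filter_mem (h : IsCovering n X A) :
    ∑ x ∈ X, #{B ∈ A | x ∈ B} = 3 * #A := by
  have := sum_card_bipartiteAbove_eq_sum_card_bipartiteBelow (· ∈ ·) (s := X) (t := A)
  simp only [bipartiteAbove, bipartiteBelow] at this
  rw [this, mul_comm, ← sum_const_nat fun B hB => (h.2.1 B hB).2]
  refine sum_congr rfl fun B hB => ?_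
  rw [filter_mem_eq_inter, inter_eq_right.2 (h.2.1 B hB).1]

theorem coveringBound_le_card (h : IsCovering n X A) : coveringBound n ≤ #A := by
  rw [coveringBound, ceilDiv_le_iff_le_mul three_pos, ← h.sum_card_filter_mem]
  calc n * (n / 2) = ∑ _x ∈ X, n / 2 := by rw [sum_const, smul_eq_mul, h.1]
    _ ≤ ∑ x ∈ X, #{B ∈ A | x ∈ B} := sum_le_sum fun x hx => by
      have := h.sub_one_le_two_mul_card_filter_mem hx
      omega

end IsCovering

namespace CoveringDesign

variable {α β : Type*}

def CoversPair (F : Finset (Finset α)) (x y : α) : Prop := ∃ B ∈ F, x ∈ B ∧ y ∈ B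

theorem CoversPair.symm {F : Finset (Finset α)} {x y : α} (h : CoversPair F x y) :
    CoversPair F y x :=
  let ⟨B, hB, hx, hy⟩ := h; ⟨B, hB, hy, hx⟩

theorem CoversPair.mono {F G : Finset (Finset α)} (hFG : F ⊆ G) {x y : α}
    (h : CoversPair F x y) : CoversPair G x y :=
  let ⟨B, hB, hx, hy⟩ := h; ⟨B, hFG hB, hx, hy⟩

theorem CoversPair.image [DecidableEq β] {F : Finset (Finset α)} {x y : α}
    (h : CoversPair F x y) (e : α → β) :
    CoversPair (F.image (image e)) (e x) (e y) :=
  let ⟨B, hB, hx, hy⟩ := h; ⟨B.image e, mem_image_of_mem _ hB, mem_image_of_mem _ hx,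
    mem_image_of_mem _ hy⟩

/-- Blocks of at most three points are allowed; `IsTripleCover.exists_isCovering` pads them to
triples. -/
structure IsTripleCover (F : Finset (Finset α)) : Prop where
  card_le : ∀ B ∈ F, #B ≤ 3
  coversPair : Pairwise (CoversPair F)

theorem isCovering_image_of_injective [Fintype α] [DecidableEq α] {F : Finset (Finset α)}
    (hF : ∀ B ∈ F, #B = 3) (hcov : Pairwise (CoversPair F)) {g : α → ℕ}
    (hg : g.Injective) :
    IsCovering (Fintype.card α) (univ.image g) (F.image (image g)) := by
  refine ⟨by rw [card_image_of_injective _ hg, card_univ], fun B hB => ?_, ?_⟩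
  · obtain ⟨C, hC, rfl⟩ := mem_image.1 hB
    exact ⟨image_subset_image (subset_univ C), by rw [card_image_of_injective _ hg, hF C hC]⟩
  · intro x hx y hy hxy
    obtain ⟨a, -, rfl⟩ := mem_image.1 hx
    obtain ⟨b, -, rfl⟩ := mem_image.1 hy
    exact (hcov (ne_of_apply_ne g hxy)).image g

theorem IsTripleCover.exists_isCovering [Fintype α] [DecidableEq α] {F : Finset (Finset α)}
    (hF : IsTripleCover F) {n m : ℕ} (hα : Fintype.card α = n) (hn : 3 ≤ n) (hm : #F ≤ m) :
    ∃ X A, IsCovering n X A ∧ #A ≤ m := by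
  subst hα
  have hpad (B : Finset α) : ∃ B', #B ≤ 3 → B ⊆ B' ∧ #B' = 3 := by
    by_cases hB : #B ≤ 3
    · obtain ⟨B', hBB', hB'⟩ := exists_superset_card_eq hB hn
      exact ⟨B', fun _ => ⟨hBB', hB'⟩⟩
    · exact ⟨B, fun h => absurd h hB⟩
  choose pad hpad using hpad
  have hcov : Pairwise (CoversPair (F.image pad)) := fun x y hxy =>
    let ⟨B, hB, hx, hy⟩ := hF.coversPair hxy
    ⟨pad B, mem_image_of_mem _ hB, (hpad B (hF.card_le B hB)).1 hx,
      (hpad B (hF.card_le B hB)).1 hy⟩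
  have hcard : ∀ B ∈ F.image pad, #B = 3 := by
    simp only [mem_image]
    rintro _ ⟨B, hB, rfl⟩
    exact (hpad B (hF.card_le B hB)).2
  have hg : Function.Injective fun a => (Fintype.equivFin α a : ℕ) :=
    Fin.val_injective.comp (Fintype.equivFin α).injective
  refine ⟨_, _, isCovering_image_of_injective hcard hcov hg, ?_⟩
  exact card_image_le.trans (card_image_le.trans hm)

def windmill [DecidableEq α] (u : α) (c : ℕ → α) (r : ℕ) : Finset (Finset α) :=
  (range r).image fun i => {u, c (2 * i), c (2 * i + 1)}

section Windmill

variable [DecidableEq α] {u : α} {c : ℕ → α} {r : ℕ}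

theorem card_windmill_le : #(windmill u c r) ≤ r :=
  card_image_le.trans (card_range r).le

theorem card_le_three_of_mem_windmill {B : Finset α} (hB : B ∈ windmill u c r) : #B ≤ 3 := by
  obtain ⟨i, -, rfl⟩ := mem_image.1 hB
  exact card_le_three

theorem coversPair_windmill_center {j : ℕ} (hj : j < 2 * r) :
    CoversPair (windmill u c r) u (c j) := by
  refine ⟨_, mem_image_of_mem _ (mem_range.2 (show j / 2 < r by omega)), by simp, ?_⟩
  rcases Nat.even_or_odd' j with ⟨i, rfl | rfl⟩ <;> simp [Nat.mul_add_div]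

theorem coversPair_windmill_blade {i : ℕ} (hi : i < r) :
    CoversPair (windmill u c r) (c (2 * i)) (c (2 * i + 1)) :=
  ⟨_, mem_image_of_mem _ (mem_range.2 hi), by simp, by simp⟩

end Windmill

theorem IsTripleCover.exists_option [Fintype α] [DecidableEq α] {F : Finset (Finset α)}
    (hF : IsTripleCover F) : ∃ F' : Finset (Finset (Option α)),
      IsTripleCover F' ∧ #F' ≤ #F + (Fintype.card α + 1) / 2 := by
  let c : ℕ → Option α := fun j =>
    if hj : j < Fintype.card α then some ((Fintype.equivFin α).symm ⟨j, hj⟩) else none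
  have hc (a : α) : ∃ j < Fintype.card α, c j = some a :=
    ⟨Fintype.equivFin α a, (Fintype.equivFin α a).2, by simp [c]⟩
  refine ⟨F.image (image some) ∪ windmill none c ((Fintype.card α + 1) / 2), ⟨?_, ?_⟩,
    (card_union_le _ _).trans (add_le_add card_image_le card_windmill_le)⟩
  · simp only [mem_union, mem_image]
    rintro _ (⟨B, hB, rfl⟩ | hB)
    · exact card_image_le.trans (hF.card_le B hB)
    · exact card_le_three_of_mem_windmill hB
  · have hnone (a : α) : CoversPair
        (F.image (image some) ∪ windmill none c ((Fintype.card α + 1) / 2)) none (some a) := by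
      obtain ⟨j, hj, hja⟩ := hc a
      exact hja ▸ (coversPair_windmill_center (by omega)).mono subset_union_right
    rintro (_ | a) (_ | b) hab
    · exact absurd rfl hab
    · exact hnone b
    · exact (hnone a).symm
    · exact ((hF.coversPair (ne_of_apply_ne some hab)).image some).mono subset_union_left

section TwinWindmill

variable [DecidableEq α] (u v : α) (c : ℕ → α) (r : ℕ)

def twinWindmill : Finset (Finset α) :=
  insert {u, v, c 0} (windmill u c (r + 1) ∪ windmill v (fun i => c (i + 1)) r)

variable {u v c r}

theorem card_twinWindmill_le : #(twinWindmill u v c r) ≤ 2 * r + 2 := by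
  refine (card_insert_le _ _).trans ?_
  have := (card_union_le (windmill u c (r + 1)) (windmill v (fun i => c (i + 1)) r)).trans
    (add_le_add card_windmill_le card_windmill_le)
  omega

theorem card_le_three_of_mem_twinWindmill {B : Finset α} (hB : B ∈ twinWindmill u v c r) :
    #B ≤ 3 := by
  rcases mem_insert.1 hB with rfl | hB
  · exact card_le_three
  · rcases mem_union.1 hB with hB | hB <;> exact card_le_three_of_mem_windmill hB

theorem coversPair_twinWindmill_hubs : CoversPair (twinWindmill u v c r) u v :=
  ⟨_, mem_insert_self _ _, by simp, by simp⟩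

theorem coversPair_twinWindmill_left {j : ℕ} (hj : j ≤ 2 * r + 1) :
    CoversPair (twinWindmill u v c r) u (c j) :=
  ((coversPair_windmill_center (by omega)).mono subset_union_left).mono (subset_insert _ _)

theorem coversPair_twinWindmill_right {j : ℕ} (hj : j ≤ 2 * r) :
    CoversPair (twinWindmill u v c r) v (c j) := by
  rcases j with _ | j
  · exact ⟨_, mem_insert_self _ _, by simp, by simp⟩
  · exact ((coversPair_windmill_center (c := fun i => c (i + 1)) (by omega)).mono
      subset_union_right).mono (subset_insert _ _)

theorem coversPair_twinWindmill_succ {i : ℕ} (hi : i ≤ 2 * r) :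
    CoversPair (twinWindmill u v c r) (c i) (c (i + 1)) := by
  rcases Nat.even_or_odd' i with ⟨q, rfl | rfl⟩
  · exact ((coversPair_windmill_blade (by omega)).mono subset_union_left).mono (subset_insert _ _)
  · exact ((coversPair_windmill_blade (c := fun i => c (i + 1)) (by omega)).mono
      subset_union_right).mono (subset_insert _ _)

end TwinWindmill

section Bose

variable {G : Type*} [AddCommGroup G] [DecidableEq G]

theorem fin_three_eq_add_one_or_eq_add_one :
    ∀ {k l : Fin 3}, k ≠ l → l = k + 1 ∨ k = l + 1 := by
  decide

def boseBlock (f : Fin 3 → G → G) (k : Fin 3) (P : Finset G) : Finset (G × Fin 3) :=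
  insert (f k (∑ x ∈ P, x), k + 1) (P.image (·, k))

theorem mem_boseBlock_pair (k : Fin 3) {f : Fin 3 → G → G} {a b : G} (hab : a ≠ b) :
    (a, k) ∈ boseBlock f k {a, b} ∧ (b, k) ∈ boseBlock f k {a, b} ∧
      (f k (a + b), k + 1) ∈ boseBlock f k {a, b} := by
  simp [boseBlock, sum_pair hab]

variable [Fintype G]

def boseFamily (f : Fin 3 → G → G) : Finset (Finset (G × Fin 3)) :=
  (univ ×ˢ univ.powersetCard 2).image fun p => boseBlock f p.1 p.2

variable {f : Fin 3 → G → G}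

theorem card_boseFamily_le : #(boseFamily f) ≤ 3 * (Fintype.card G).choose 2 := by
  refine card_image_le.trans_eq ?_
  rw [card_product, card_powersetCard, card_univ, card_univ, Fintype.card_fin]

theorem card_le_three_of_mem_boseFamily {B : Finset (G × Fin 3)} (hB : B ∈ boseFamily f) :
    #B ≤ 3 := by
  obtain ⟨⟨k, P⟩, hP, rfl⟩ := mem_image.1 hB
  have hP2 : #P = 2 := (mem_powersetCard.1 (mem_product.1 hP).2).2
  calc #(boseBlock f k P) ≤ #(P.image (·, k)) + 1 := card_insert_le _ _
    _ ≤ 3 := by have := card_image_le (s := P) (f := (·, k)); omega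

theorem boseBlock_pair_mem_boseFamily (k : Fin 3) {a b : G} (hab : a ≠ b) :
    boseBlock f k {a, b} ∈ boseFamily f :=
  mem_image.2 ⟨(k, {a, b}), mem_product.2 ⟨mem_univ k, mem_powersetCard.2
    ⟨subset_univ _, card_pair hab⟩⟩, rfl⟩

theorem coversPair_boseFamily_same (k : Fin 3) {a b : G} (hab : a ≠ b) :
    CoversPair (boseFamily f) (a, k) (b, k) :=
  ⟨_, boseBlock_pair_mem_boseFamily k hab, (mem_boseBlock_pair k hab).1,
    (mem_boseBlock_pair k hab).2.1⟩

theorem coversPair_boseFamily_succ {k : Fin 3} (hf : (f k).Surjective) {a b : G}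
    (hb : b ≠ f k (a + a)) : CoversPair (boseFamily f) (a, k) (b, k + 1) := by
  obtain ⟨s, rfl⟩ := hf b
  have hne : a ≠ s - a := fun h => hb (by rw [sub_eq_iff_eq_add.1 h.symm])
  obtain ⟨ha, -, hs⟩ := mem_boseBlock_pair (f := f) k hne
  exact ⟨_, boseBlock_pair_mem_boseFamily k hne, ha, by rwa [add_sub_cancel] at hs⟩

theorem coversPair_of_boseFamily [DecidableEq α] {F : Finset (Finset α)} (e : G × Fin 3 → α)
    (hf : ∀ k, (f k).Surjective) (hF : ∀ B ∈ boseFamily f, B.image e ∈ F)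
    (hleftover : ∀ a k, CoversPair F (e (a, k)) (e (f k (a + a), k + 1)))
    {x y : G × Fin 3} (hxy : x ≠ y) : CoversPair F (e x) (e y) := by
  have hsub : (boseFamily f).image (image e) ⊆ F := fun B hB => by
    obtain ⟨C, hC, rfl⟩ := mem_image.1 hB
    exact hF C hC
  have hsucc (a b : G) (k : Fin 3) : CoversPair F (e (a, k)) (e (b, k + 1)) := by
    by_cases hb : b = f k (a + a)
    · exact hb ▸ hleftover a k
    · exact ((coversPair_boseFamily_succ (hf k) hb).image e).mono hsub
  obtain ⟨a, k⟩ := x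
  obtain ⟨b, l⟩ := y
  rcases eq_or_ne k l with rfl | hkl
  · exact ((coversPair_boseFamily_same k fun h => hxy (by rw [h])).image e).mono hsub
  · rcases fin_three_eq_add_one_or_eq_add_one hkl with rfl | rfl
    · exact hsucc a b k
    · exact (hsucc b a l).symm

end Bose

section Columns

variable {G : Type*}

def column (a : G) : Finset (G × Fin 3) := {a} ×ˢ univ

theorem mem_column (a : G) (k : Fin 3) : (a, k) ∈ column a := by simp [column]

theorem card_column (a : G) : #(column a) = 3 := by simp [column]

variable [AddCommGroup G] [Fintype G] [DecidableEq G]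

theorem isTripleCover_boseFamily_union_columns {half : G → G} (hhalf : ∀ a, half (a + a) = a) :
    IsTripleCover (boseFamily (fun _ => half) ∪ univ.image column) := by
  refine ⟨fun B hB => ?_, fun x y hxy => ?_⟩
  · rcases mem_union.1 hB with hB | hB
    · exact card_le_three_of_mem_boseFamily hB
    · obtain ⟨a, -, rfl⟩ := mem_image.1 hB
      exact (card_column a).le
  · refine coversPair_of_boseFamily id (fun _ b => ⟨b + b, hhalf b⟩)
      (fun B hB => by rw [image_id]; exact mem_union_left _ hB) (fun a k => ?_) hxy
    exact ⟨column a, mem_union_right _ (mem_image_of_mem _ (mem_univ a)), mem_column a k,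
      by simpa [hhalf] using mem_column a (k + 1)⟩

theorem card_boseFamily_union_columns_le (f : Fin 3 → G → G) :
    #(boseFamily f ∪ univ.image column) ≤ 3 * (Fintype.card G).choose 2 + Fintype.card G :=
  (card_union_le _ _).trans (add_le_add card_boseFamily_le (card_image_le.trans_eq card_univ))

end Columns

section OddCyclic

variable (t : ℕ)

theorem natCast_add_one_mul_add_self (a : ZMod (2 * t + 1)) :
    ((t : ZMod (2 * t + 1)) + 1) * (a + a) = a := by
  have h0 : ((2 * t + 1 : ℕ) : ZMod (2 * t + 1)) = 0 := ZMod.natCast_self _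
  push_cast at h0
  linear_combination a * h0

theorem card_zmod_two_mul_add_one_prod_fin_three :
    Fintype.card (ZMod (2 * t + 1) × Fin 3) = 6 * t + 3 := by
  simp only [Fintype.card_prod, ZMod.card, Fintype.card_fin]
  ring

theorem isTripleCover_zmod_two_mul_add_one :
    IsTripleCover
      (boseFamily (fun _ a => ((t : ZMod (2 * t + 1)) + 1) * a) ∪ univ.image column) :=
  isTripleCover_boseFamily_union_columns (natCast_add_one_mul_add_self t)

theorem exists_isCovering_six_mul_add_three :
    ∃ X A, IsCovering (6 * t + 3) X A ∧ #A ≤ coveringBound (6 * t + 3) := by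
  refine (isTripleCover_zmod_two_mul_add_one t).exists_isCovering
    (card_zmod_two_mul_add_one_prod_fin_three t) (by omega)
    ((card_boseFamily_union_columns_le _).trans (le_coveringBound_of_three_mul_le ?_))
  rw [ZMod.card, Nat.choose_two_two_mul_add_one, show (6 * t + 3) / 2 = 3 * t + 1 by omega]
  ring_nf; omega

theorem exists_isCovering_six_mul_add_four :
    ∃ X A, IsCovering (6 * t + 4) X A ∧ #A ≤ coveringBound (6 * t + 4) := by
  obtain ⟨F, hF, hcard⟩ := (isTripleCover_zmod_two_mul_add_one t).exists_option
  refine hF.exists_isCovering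
    (by rw [Fintype.card_option, card_zmod_two_mul_add_one_prod_fin_three]) (by omega)
    (hcard.trans (le_coveringBound_of_three_mul_le ?_))
  grw [card_boseFamily_union_columns_le]
  rw [ZMod.card, Nat.choose_two_two_mul_add_one, card_zmod_two_mul_add_one_prod_fin_three,
    show (6 * t + 3 + 1) / 2 = 3 * t + 2 by omega]
  ring_nf; omega

end OddCyclic

section CyclicWalk

variable {m : ℕ}

def cyclicStep (p : ZMod m × Fin 3) : ZMod m × Fin 3 := (p.1 + if p.2 = 0 then 1 else 0, p.2 + 1)

theorem cyclicStep_iterate_three_mul (q : ℕ) :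
    cyclicStep^[3 * q] ((0 : ZMod m), (0 : Fin 3)) = ((q : ZMod m), 0) := by
  induction q with
  | zero => simp
  | succ q ih =>
    rw [mul_add, add_comm, Function.iterate_add_apply, ih]
    simp [cyclicStep]

theorem exists_cyclicStep_iterate_eq [NeZero m] (p : ZMod m × Fin 3) :
    ∃ i < 3 * m, cyclicStep^[i] (0, 0) = p := by
  obtain ⟨a, k⟩ := p
  have hlt := ZMod.val_lt (a - 1)
  have hprev : cyclicStep^[3 * (a - 1).val] ((0 : ZMod m), (0 : Fin 3)) = (a - 1, 0) := by
    rw [cyclicStep_iterate_three_mul, ZMod.natCast_zmod_val]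
  fin_cases k
  · exact ⟨3 * a.val, by have := ZMod.val_lt a; omega, by
      rw [cyclicStep_iterate_three_mul, ZMod.natCast_zmod_val]; rfl⟩
  · refine ⟨3 * (a - 1).val + 1, by omega, ?_⟩
    rw [Function.iterate_succ_apply', hprev]
    simp [cyclicStep]
  · refine ⟨3 * (a - 1).val + 2, by omega, ?_⟩
    rw [Function.iterate_succ_apply', Function.iterate_succ_apply', hprev]
    simp [cyclicStep]

end CyclicWalk

section SixMulAddFive

variable (t : ℕ)

def shiftedHalf (k : Fin 3) (a : ZMod (2 * t + 1)) : ZMod (2 * t + 1) :=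
  ((t : ZMod (2 * t + 1)) + 1) * a + if k = 0 then 1 else 0

theorem shiftedHalf_add_self (k : Fin 3) (a : ZMod (2 * t + 1)) :
    shiftedHalf t k (a + a) = a + if k = 0 then 1 else 0 := by
  rw [shiftedHalf, natCast_add_one_mul_add_self]

theorem shiftedHalf_surjective (k : Fin 3) : (shiftedHalf t k).Surjective := fun b =>
  ⟨_, (shiftedHalf_add_self t k _).trans (sub_add_cancel b _)⟩

def boseTwinWindmill : Finset (Finset ((ZMod (2 * t + 1) × Fin 3) ⊕ Bool)) :=
  (boseFamily (shiftedHalf t)).image (image Sum.inl) ∪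
    twinWindmill (Sum.inr false) (Sum.inr true) (fun i => Sum.inl (cyclicStep^[i] (0, 0)))
      (3 * t + 1)

theorem isTripleCover_boseTwinWindmill : IsTripleCover (boseTwinWindmill t) := by
  have hwalk (p : ZMod (2 * t + 1) × Fin 3) :
      ∃ i ≤ 2 * (3 * t + 1), cyclicStep^[i] (0, 0) = p := by
    obtain ⟨i, hi, hip⟩ := exists_cyclicStep_iterate_eq p
    exact ⟨i, by omega, hip⟩
  have hhub (b : Bool) (p : ZMod (2 * t + 1) × Fin 3) :
      CoversPair (boseTwinWindmill t) (Sum.inr b) (Sum.inl p) := by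
    obtain ⟨i, hi, rfl⟩ := hwalk p
    refine CoversPair.mono subset_union_right ?_
    cases b
    · exact coversPair_twinWindmill_left (by omega)
    · exact coversPair_twinWindmill_right hi
  refine ⟨fun B hB => ?_, ?_⟩
  · rcases mem_union.1 hB with hB | hB
    · obtain ⟨C, hC, rfl⟩ := mem_image.1 hB
      exact card_image_le.trans (card_le_three_of_mem_boseFamily hC)
    · exact card_le_three_of_mem_twinWindmill hB
  rintro (x | b) (y | b') hxy
  · refine coversPair_of_boseFamily Sum.inl (shiftedHalf_surjective t)
      (fun B hB => mem_union_left _ (mem_image_of_mem _ hB)) (fun a k => ?_)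
      (ne_of_apply_ne _ hxy)
    obtain ⟨i, hi, hia⟩ := hwalk (a, k)
    have hedge := coversPair_twinWindmill_succ (u := (Sum.inr false : _ ⊕ Bool))
      (v := Sum.inr true) (c := fun i => Sum.inl (cyclicStep^[i] ((0 : ZMod (2 * t + 1)), 0))) hi
    simp only [Function.iterate_succ_apply', hia] at hedge
    simpa [shiftedHalf_add_self, cyclicStep] using hedge.mono subset_union_right
  · exact (hhub b' x).symm
  · exact hhub b y
  · cases b <;> cases b' <;> first
      | exact absurd rfl hxy
      | exact coversPair_twinWindmill_hubs.mono subset_union_right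
      | exact coversPair_twinWindmill_hubs.symm.mono subset_union_right

theorem exists_isCovering_six_mul_add_five :
    ∃ X A, IsCovering (6 * t + 5) X A ∧ #A ≤ coveringBound (6 * t + 5) := by
  refine (isTripleCover_boseTwinWindmill t).exists_isCovering
    (by rw [Fintype.card_sum, card_zmod_two_mul_add_one_prod_fin_three, Fintype.card_bool])
    (by omega) ((card_union_le _ _).trans (le_coveringBound_of_three_mul_le ?_))
  grw [card_image_le, card_boseFamily_le, card_twinWindmill_le]
  rw [ZMod.card, Nat.choose_two_two_mul_add_one, show (6 * t + 5) / 2 = 3 * t + 2 by omega]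
  ring_nf; omega

end SixMulAddFive

section EvenCyclic

variable (h : ℕ)

def evenHalf (z : ZMod (2 * h)) : ZMod (2 * h) :=
  ((z.val / 2 + z.val % 2 * h : ℕ) : ZMod (2 * h))

variable {h}

theorem evenHalf_natCast {q r : ℕ} (hq : q < h) (hr : r < 2) :
    evenHalf h ((2 * q + r : ℕ) : ZMod (2 * h)) = ((q + r * h : ℕ) : ZMod (2 * h)) := by
  have hlt : 2 * q + r < 2 * h := by omega
  rw [evenHalf, ZMod.val_cast_of_lt hlt, show (2 * q + r) / 2 = q by omega,
    show (2 * q + r) % 2 = r by omega]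

variable [NeZero h]

theorem exists_eq_natCast_add_mul (a : ZMod (2 * h)) :
    ∃ s r, s < h ∧ r < 2 ∧ a = ((s + r * h : ℕ) : ZMod (2 * h)) := by
  refine ⟨a.val % h, a.val / h, Nat.mod_lt _ (NeZero.pos h), ?_, ?_⟩
  · exact (Nat.div_lt_iff_lt_mul (NeZero.pos h)).2 (ZMod.val_lt a)
  · rw [Nat.mod_add_div', ZMod.natCast_zmod_val]

theorem evenHalf_surjective : (evenHalf h).Surjective := fun b => by
  obtain ⟨s, r, hs, hr, rfl⟩ := exists_eq_natCast_add_mul b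
  exact ⟨_, evenHalf_natCast hs hr⟩

theorem exists_evenHalf_add_self (a : ZMod (2 * h)) :
    ∃ s < h, evenHalf h (a + a) = s ∧ (a = s ∨ a = ((s + h : ℕ) : ZMod (2 * h))) := by
  obtain ⟨s, r, hs, hr, rfl⟩ := exists_eq_natCast_add_mul a
  have h2h : ((2 * h : ℕ) : ZMod (2 * h)) = 0 := ZMod.natCast_self _
  have hdouble : ((s + r * h : ℕ) : ZMod (2 * h)) + ((s + r * h : ℕ) : ZMod (2 * h)) =
      ((2 * s + 0 : ℕ) : ZMod (2 * h)) := by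
    push_cast at h2h ⊢
    linear_combination r * h2h
  refine ⟨s, hs, by rw [hdouble, evenHalf_natCast hs two_pos]; simp, ?_⟩
  interval_cases r <;> simp

variable (h)

theorem card_zmod_two_mul_prod_fin_three : Fintype.card (ZMod (2 * h) × Fin 3) = 6 * h := by
  simp only [Fintype.card_prod, ZMod.card, Fintype.card_fin]
  ring

def evenPatch : Finset (Finset (ZMod (2 * h) × Fin 3)) :=
  (range h ×ˢ univ).image fun p : ℕ × Fin 3 =>
    {((p.1 : ZMod (2 * h)), p.2), (((p.1 + h : ℕ) : ZMod (2 * h)), p.2),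
      ((p.1 : ZMod (2 * h)), p.2 + 1)}

theorem isTripleCover_boseFamily_union_evenPatch :
    IsTripleCover (boseFamily (fun _ => evenHalf h) ∪ evenPatch h) := by
  refine ⟨fun B hB => ?_, fun x y hxy => ?_⟩
  · rcases mem_union.1 hB with hB | hB
    · exact card_le_three_of_mem_boseFamily hB
    · obtain ⟨p, -, rfl⟩ := mem_image.1 hB
      exact card_le_three
  · refine coversPair_of_boseFamily id (fun _ => evenHalf_surjective)
      (fun B hB => by rw [image_id]; exact mem_union_left _ hB) (fun a k => ?_) hxy
    obtain ⟨s, hs, hsa, ha⟩ := exists_evenHalf_add_self a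
    refine ⟨_, mem_union_right _ (mem_image.2
      ⟨(s, k), mem_product.2 ⟨mem_range.2 hs, mem_univ k⟩, rfl⟩), ?_, by simp [hsa]⟩
    rcases ha with rfl | rfl <;> simp

theorem exists_isCovering_six_mul :
    ∃ X A, IsCovering (6 * h) X A ∧ #A ≤ coveringBound (6 * h) := by
  refine (isTripleCover_boseFamily_union_evenPatch h).exists_isCovering
    (card_zmod_two_mul_prod_fin_three h) (by have := NeZero.pos h; omega)
    ((card_union_le _ _).trans (le_coveringBound_of_three_mul_le ?_))
  grw [card_boseFamily_le, evenPatch, card_image_le]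
  rw [card_product, card_range, card_univ, Fintype.card_fin, ZMod.card,
    show 6 * h / 2 = 3 * h by omega]
  have := Nat.choose_two_two_mul_add_self h
  nlinarith

def evenStarPatch : Finset (Finset (Option (ZMod (2 * h) × Fin 3))) :=
  (range h ×ˢ univ).image fun p : ℕ × Fin 3 =>
    {none, some (((p.1 + h : ℕ) : ZMod (2 * h)), p.2), some ((p.1 : ZMod (2 * h)), p.2 + 1)}

def evenStarFamily : Finset (Finset (Option (ZMod (2 * h) × Fin 3))) :=
  (boseFamily (fun _ => evenHalf h) ∪ (range h).image fun s : ℕ => column (s : ZMod (2 * h))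
    ).image (image some) ∪ evenStarPatch h

theorem isTripleCover_evenStarFamily : IsTripleCover (evenStarFamily h) := by
  have hpatch {s : ℕ} (hs : s < h) (k : Fin 3) :
      {none, some (((s + h : ℕ) : ZMod (2 * h)), k), some ((s : ZMod (2 * h)), k + 1)} ∈
        evenStarFamily h :=
    mem_union_right _
      (mem_image.2 ⟨(s, k), mem_product.2 ⟨mem_range.2 hs, mem_univ k⟩, rfl⟩)
  have hnone (a : ZMod (2 * h)) (k : Fin 3) :
      CoversPair (evenStarFamily h) none (some (a, k)) := by
    obtain ⟨s, hs, -, rfl | rfl⟩ := exists_evenHalf_add_self a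
    · exact ⟨_, hpatch hs (k - 1), by simp, by simp⟩
    · exact ⟨_, hpatch hs k, by simp, by simp⟩
  refine ⟨fun B hB => ?_, ?_⟩
  · rcases mem_union.1 hB with hB | hB
    · obtain ⟨C, hC, rfl⟩ := mem_image.1 hB
      refine card_image_le.trans ?_
      rcases mem_union.1 hC with hC | hC
      · exact card_le_three_of_mem_boseFamily hC
      · obtain ⟨s, -, rfl⟩ := mem_image.1 hC
        exact (card_column _).le
    · obtain ⟨p, -, rfl⟩ := mem_image.1 hB
      exact card_le_three
  rintro (_ | ⟨a, k⟩) (_ | ⟨b, l⟩) hxy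
  · exact absurd rfl hxy
  · exact hnone b l
  · exact (hnone a k).symm
  refine coversPair_of_boseFamily some (fun _ => evenHalf_surjective)
    (fun B hB => mem_union_left _ (mem_image_of_mem _ (mem_union_left _ hB))) (fun a k => ?_)
    (ne_of_apply_ne _ hxy)
  obtain ⟨s, hs, hsa, rfl | rfl⟩ := exists_evenHalf_add_self a
  · refine ⟨(column (s : ZMod (2 * h))).image some, mem_union_left _ (mem_image_of_mem _
      (mem_union_right _ (mem_image_of_mem _ (mem_range.2 hs)))),
      mem_image_of_mem _ (mem_column _ _), ?_⟩
    rw [hsa]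
    exact mem_image_of_mem _ (mem_column _ _)
  · exact ⟨_, hpatch hs k, by simp, by rw [hsa]; simp⟩

theorem card_evenStarFamily_le : #(evenStarFamily h) ≤ 6 * h * h + h := by
  have hcols : #((range h).image fun s : ℕ => column (s : ZMod (2 * h))) ≤ h :=
    card_image_le.trans (card_range h).le
  have hpatch : #(evenStarPatch h) ≤ h * 3 := card_image_le.trans (by simp)
  have hbose := (card_boseFamily_le (f := fun _ => evenHalf h)).trans_eq (by rw [ZMod.card])
  have := Nat.choose_two_two_mul_add_self h
  grw [evenStarFamily, card_union_le, card_image_le, card_union_le, hbose, hcols, hpatch]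
  nlinarith

theorem exists_isCovering_six_mul_add_one :
    ∃ X A, IsCovering (6 * h + 1) X A ∧ #A ≤ coveringBound (6 * h + 1) := by
  refine (isTripleCover_evenStarFamily h).exists_isCovering
    (by rw [Fintype.card_option, card_zmod_two_mul_prod_fin_three])
    (by have := NeZero.pos h; omega)
    ((card_evenStarFamily_le h).trans (le_coveringBound_of_three_mul_le ?_))
  rw [show (6 * h + 1) / 2 = 3 * h by omega]
  ring_nf; omega

theorem exists_isCovering_six_mul_add_two :
    ∃ X A, IsCovering (6 * h + 2) X A ∧ #A ≤ coveringBound (6 * h + 2) := by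
  obtain ⟨F, hF, hcard⟩ := (isTripleCover_evenStarFamily h).exists_option
  refine hF.exists_isCovering
    (by rw [Fintype.card_option, Fintype.card_option, card_zmod_two_mul_prod_fin_three])
    (by have := NeZero.pos h; omega) (hcard.trans (le_coveringBound_of_three_mul_le ?_))
  grw [card_evenStarFamily_le]
  rw [Fintype.card_option, card_zmod_two_mul_prod_fin_three,
    show (6 * h + 1 + 1) / 2 = 3 * h + 1 by omega]
  ring_nf; omega

end EvenCyclic

theorem exists_isCovering_card_le_coveringBound {n : ℕ} (hn : 3 ≤ n) :
    ∃ X A, IsCovering n X A ∧ #A ≤ coveringBound n := by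
  obtain ⟨q, r, hr, rfl⟩ : ∃ q r, r < 6 ∧ n = 6 * q + r :=
    ⟨n / 6, n % 6, Nat.mod_lt _ (by norm_num), (Nat.div_add_mod n 6).symm⟩
  have hq (hr : r < 3) : NeZero q := ⟨by omega⟩
  interval_cases r
  · have := hq (by norm_num); exact exists_isCovering_six_mul q
  · have := hq (by norm_num); exact exists_isCovering_six_mul_add_one q
  · have := hq (by norm_num); exact exists_isCovering_six_mul_add_two q
  · exact exists_isCovering_six_mul_add_three q
  · exact exists_isCovering_six_mul_add_four q
  · exact exists_isCovering_six_mul_add_five q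

end CoveringDesign

theorem coveringNumber_eq_coveringBound {n : ℕ} (hn : 3 ≤ n) :
    coveringNumber n = coveringBound n := by
  obtain ⟨X, A, hcov, hA⟩ := CoveringDesign.exists_isCovering_card_le_coveringBound hn
  have hmem : #A ∈ {m | ∃ X A, IsCovering n X A ∧ #A = m} := ⟨X, A, hcov, rfl⟩
  refine le_antisymm ((Nat.sInf_le hmem).trans hA) (le_csInf ⟨_, hmem⟩ ?_)
  rintro _ ⟨X', A', h', rfl⟩
  exact h'.coveringBound_le_card

/-- (Fort–Hedlund) For every integer `n ≥ 3`,
`C(n,3,2) = ⌈(n/3)·⌈(n−1)/2⌉⌉`. -/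
theorem fort_hedlund (n : ℕ) (hn : 3 ≤ n) :
    (coveringNumber n : ℤ) = ⌈(n : ℚ) / 3 * ((⌈((n : ℚ) - 1) / 2⌉ : ℤ) : ℚ)⌉ := by
  have hhalf : ⌈((n : ℚ) - 1) / 2⌉ = ((n / 2 : ℕ) : ℤ) := by
    have := ceil_natCast_div_natCast_eq_ceilDiv (n - 1) 2
    rw [Nat.cast_sub (by omega), Nat.cast_one, Nat.cast_two, Nat.ceilDiv_eq_add_pred_div,
      show n - 1 + 2 - 1 = n by omega] at this
    exact this
  rw [coveringNumber_eq_coveringBound hn, hhalf, Int.cast_natCast, coveringBound,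
    ← ceil_natCast_div_natCast_eq_ceilDiv]
  congr 1
  push_cast
  ring
end
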